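/- arXiv:2502.14312 — 9 statements merged into one kernel-verified Lean document; each statement's English description precedes it below -/
import Mathlib

section
/- Let β > 0, ω > 0, α ≥ 0, S > 0 and ε ∈ (0, 1). If u_ε : [0, S] → ℝ is a twice continuously differentiable solution of u_ε'' + (β/√ω)·u_ε' + √(2·max(u_ε, 0) + ε) = 1 with u_ε(0) = α²/2 and u_ε'(0) = 0, then for every s ∈ [0, S]: (1/2)·u_ε'(s)² + (β/(4√ω))·∫₀ˢ u_ε'(t)² dt ≤ (S·√ω/(2β))·(α² + 1) + (√ω/β)·(1 + S·√ω/β)²·S. In particular the bound on max_{s∈[0,S]} |u_ε'(s)| obtained from this inequality is independent of ε. -/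
open Set

/-!
With `k = β/√ω` and `q = √(2 max(u, 0) + ε) ≥ 0`, the equation reads `u'' + k u' = 1 - q ≤ 1`.
Hence `e^{ks}(u' - 1/k)` is nonincreasing, so `u' ≤ 1/k` and `u(s) ≤ α²/2 + s/k`, which bounds
`q² ≤ α² + 2S/k + 1` independently of `ε`. Multiplying the equation by `u'` and completing the
square, `(½u'² + (k/2)∫₀ˢ u'²)' = u'(1 - q) - (k/2)u'² ≤ (1 - q)²/(2k) ≤ (1 + q²)/(2k)`,
and integrating this over `[0, s]` gives the energy bound.
-/

lemma le_left_of_hasDerivAt_nonpos {a b : ℝ} {f f' : ℝ → ℝ} (hf : ContinuousOn f (Icc a b))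
    (hf' : ∀ x ∈ Ioo a b, HasDerivAt f (f' x) x) (hf'₀ : ∀ x ∈ Ioo a b, f' x ≤ 0) :
    ∀ x ∈ Icc a b, f x ≤ f a := by
  have hanti : AntitoneOn f (Icc a b) :=
    antitoneOn_of_hasDerivWithinAt_nonpos (convex_Icc a b) hf
      (fun x hx => by rw [interior_Icc] at hx ⊢; exact (hf' x hx).hasDerivWithinAt)
      (fun x hx => by rw [interior_Icc] at hx; exact hf'₀ x hx)
  exact fun x hx => hanti (left_mem_Icc.2 (hx.1.trans hx.2)) hx hx.1

lemma le_add_mul_of_hasDerivAt_le {a b c : ℝ} {f f' : ℝ → ℝ} (hf : ContinuousOn f (Icc a b))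
    (hf' : ∀ x ∈ Ioo a b, HasDerivAt f (f' x) x) (hle : ∀ x ∈ Ioo a b, f' x ≤ c) :
    ∀ x ∈ Icc a b, f x ≤ f a + c * (x - a) := by
  intro x hx
  have := le_left_of_hasDerivAt_nonpos (f := fun x => f x - c * x) (f' := fun x => f' x - c)
    (hf.sub (continuousOn_const.mul continuousOn_id))
    (fun y hy => (hf' y hy).sub ((hasDerivAt_id y).const_mul c |>.congr_deriv (mul_one c)))
    (fun y hy => sub_nonpos.2 (hle y hy)) x hx
  linarith

lemma mul_add_half_mul_sq_le {k p r q : ℝ} (hk : 0 < k) (hq : 0 ≤ q) (hr : r + k * p + q = 1) :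
    p * r + k / 2 * p ^ 2 ≤ (1 + q ^ 2) / (2 * k) := by
  obtain rfl : r = 1 - k * p - q := by linarith
  rw [le_div_iff₀ (by positivity)]
  nlinarith [sq_nonneg (k * p - (1 - q))]

section DampedOscillator

variable {S k : ℝ} {v v' : ℝ → ℝ}

lemma le_inv_of_deriv_add_mul_le_one (hk : 0 < k) (hv : ContinuousOn v (Icc 0 S))
    (hv' : ∀ x ∈ Ioo 0 S, HasDerivAt v (v' x) x) (hle : ∀ x ∈ Ioo 0 S, v' x + k * v x ≤ 1)
    (h0 : v 0 = 0) : ∀ s ∈ Icc 0 S, v s ≤ k⁻¹ := by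
  have hexp (x : ℝ) : HasDerivAt (fun s => Real.exp (k * s)) (Real.exp (k * x) * k) x := by
    simpa using ((hasDerivAt_id x).const_mul k).exp
  have hmono := le_left_of_hasDerivAt_nonpos
    (f := fun s => Real.exp (k * s) * (v s - k⁻¹))
    (f' := fun x => Real.exp (k * x) * (v' x + k * v x - 1))
    ((Real.continuous_exp.comp (continuous_const.mul continuous_id)).continuousOn.mul
      (hv.sub continuousOn_const))
    (fun x hx => ((hexp x).mul ((hv' x hx).sub_const k⁻¹)).congr_deriv (by field_simp; ring))
    (fun x hx => mul_nonpos_of_nonneg_of_nonpos (Real.exp_pos _).le (by linarith [hle x hx]))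
  intro s hs
  have h := hmono s hs
  simp only [mul_zero, Real.exp_zero, one_mul, h0, zero_sub] at h
  have hk' : 0 < k⁻¹ := inv_pos.2 hk
  nlinarith [Real.exp_pos (k * s)]

lemma half_sq_add_mul_integral_sq_le {C : ℝ} (hv : ContinuousOn v (Icc 0 S))
    (hv' : ∀ x ∈ Ioo 0 S, HasDerivAt v (v' x) x) (h0 : v 0 = 0)
    (hle : ∀ x ∈ Ioo 0 S, v x * v' x + k / 2 * v x ^ 2 ≤ C) :
    ∀ s ∈ Icc 0 S, 1 / 2 * v s ^ 2 + k / 2 * ∫ t in (0 : ℝ)..s, v t ^ 2 ≤ C * s := by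
  intro s hs
  have hS : 0 ≤ S := hs.1.trans hs.2
  have hsq : ContinuousOn (fun t => v t ^ 2) (Icc 0 S) := hv.pow 2
  have hprim : ContinuousOn (fun s => ∫ t in (0 : ℝ)..s, v t ^ 2) (Icc 0 S) := by
    simpa only [uIcc_of_le hS] using
      intervalIntegral.continuousOn_primitive_interval' (hsq.intervalIntegrable_of_Icc hS)
        left_mem_uIcc
  have hderiv (x : ℝ) (hx : x ∈ Ioo 0 S) :
      HasDerivAt (fun s => ∫ t in (0 : ℝ)..s, v t ^ 2) (v x ^ 2) x :=
    intervalIntegral.integral_hasDerivAt_right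
      ((hsq.mono (Icc_subset_Icc le_rfl hx.2.le)).intervalIntegrable_of_Icc hx.1.le)
      (hsq.mono Ioo_subset_Icc_self |>.stronglyMeasurableAtFilter isOpen_Ioo x hx)
      (hsq.continuousAt (Icc_mem_nhds hx.1 hx.2))
  have h := le_add_mul_of_hasDerivAt_le
    (f := fun s => 1 / 2 * v s ^ 2 + k / 2 * ∫ t in (0 : ℝ)..s, v t ^ 2)
    (f' := fun x => v x * v' x + k / 2 * v x ^ 2)
    ((continuousOn_const.mul hsq).add (continuousOn_const.mul hprim))
    (fun x hx => (((hv' x hx).pow 2).const_mul (1 / 2)).add ((hderiv x hx).const_mul (k / 2))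
      |>.congr_deriv (by push_cast; ring))
    hle s hs
  simpa [h0] using h

end DampedOscillator

lemma regularized_washburn_energy_le {S k ε a : ℝ} {u u' u'' : ℝ → ℝ} (hk : 0 < k)
    (hε : ε ∈ Icc (0 : ℝ) 1) (ha : 0 ≤ a) (hu : ContinuousOn u (Icc 0 S))
    (hu'c : ContinuousOn u' (Icc 0 S)) (hu' : ∀ x ∈ Ioo 0 S, HasDerivAt u (u' x) x)
    (hu'' : ∀ x ∈ Ioo 0 S, HasDerivAt u' (u'' x) x)
    (hODE : ∀ x ∈ Ioo 0 S, u'' x + k * u' x + Real.sqrt (2 * max (u x) 0 + ε) = 1)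
    (h0 : u 0 = a) (h0' : u' 0 = 0) :
    ∀ s ∈ Icc 0 S, 1 / 2 * u' s ^ 2 + k / 2 * ∫ t in (0 : ℝ)..s, u' t ^ 2
      ≤ k⁻¹ * (a + k⁻¹ * S + 1) * s := by
  have hu'_le : ∀ s ∈ Icc 0 S, u' s ≤ k⁻¹ :=
    le_inv_of_deriv_add_mul_le_one hk hu'c hu'' (fun x hx => by
      linarith [hODE x hx, Real.sqrt_nonneg (2 * max (u x) 0 + ε)]) h0'
  have hu_le (s : ℝ) (hs : s ∈ Icc 0 S) : u s ≤ a + k⁻¹ * S := by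
    have := le_add_mul_of_hasDerivAt_le hu hu' (fun x hx => hu'_le x (Ioo_subset_Icc_self hx)) s hs
    nlinarith [hs.2, inv_pos.2 hk]
  have hq_sq (x : ℝ) (hx : x ∈ Ioo 0 S) :
      Real.sqrt (2 * max (u x) 0 + ε) ^ 2 ≤ 2 * (a + k⁻¹ * S) + 1 := by
    have hS : 0 ≤ S := hx.1.le.trans hx.2.le
    have : max (u x) 0 ≤ a + k⁻¹ * S :=
      max_le (hu_le x (Ioo_subset_Icc_self hx)) (by positivity)
    rw [Real.sq_sqrt (by linarith [hε.1, le_max_right (u x) 0])]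
    linarith [hε.2]
  refine half_sq_add_mul_integral_sq_le hu'c hu'' h0' fun x hx => ?_
  calc u' x * u'' x + k / 2 * u' x ^ 2
      ≤ (1 + Real.sqrt (2 * max (u x) 0 + ε) ^ 2) / (2 * k) :=
        mul_add_half_mul_sq_le hk (Real.sqrt_nonneg _) (hODE x hx)
    _ ≤ (1 + (2 * (a + k⁻¹ * S) + 1)) / (2 * k) := by gcongr; exact hq_sq x hx
    _ = k⁻¹ * (a + k⁻¹ * S + 1) := by ring

theorem stmt_3_general
    (β ω α S ε : ℝ) (hβ : 0 < β) (hω : 0 < ω)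
    (hε : ε ∈ Ioo (0:ℝ) 1)
    (u u' u'' : ℝ → ℝ)
    (hu' : ∀ s ∈ Icc (0:ℝ) S, HasDerivWithinAt u (u' s) (Icc 0 S) s)
    (hu'' : ∀ s ∈ Icc (0:ℝ) S, HasDerivWithinAt u' (u'' s) (Icc 0 S) s)
    (hODE : ∀ s ∈ Icc (0:ℝ) S,
      u'' s + (β / Real.sqrt ω) * u' s + Real.sqrt (2 * max (u s) 0 + ε) = 1)
    (h0 : u 0 = α^2 / 2) (h0' : u' 0 = 0) :
    (∀ s ∈ Icc (0:ℝ) S,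
      (1/2) * (u' s)^2 + (β / (4 * Real.sqrt ω)) * (∫ t in (0:ℝ)..s, (u' t)^2)
        ≤ (S * Real.sqrt ω / (2 * β)) * (α^2 + 1)
          + (Real.sqrt ω / β) * (1 + S * Real.sqrt ω / β)^2 * S) ∧
    (∀ s ∈ Icc (0:ℝ) S,
      |u' s| ≤ Real.sqrt (2 * ((S * Real.sqrt ω / (2 * β)) * (α^2 + 1)
          + (Real.sqrt ω / β) * (1 + S * Real.sqrt ω / β)^2 * S))) := by
  have hw : 0 < Real.sqrt ω := Real.sqrt_pos.2 hω
  set k := β / Real.sqrt ω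
  set m := Real.sqrt ω / β
  have hk : 0 < k := div_pos hβ hw
  have hm : 0 < m := div_pos hw hβ
  have interior_deriv {f f' : ℝ → ℝ}
      (h : ∀ s ∈ Icc (0:ℝ) S, HasDerivWithinAt f (f' s) (Icc 0 S) s) :
      ∀ x ∈ Ioo 0 S, HasDerivAt f (f' x) x :=
    fun x hx => (h x (Ioo_subset_Icc_self hx)).hasDerivAt (Icc_mem_nhds hx.1 hx.2)
  have henergy := regularized_washburn_energy_le hk (Ioo_subset_Icc_self hε)
    (by positivity : 0 ≤ α ^ 2 / 2) (fun x hx => (hu' x hx).continuousWithinAt)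
    (fun x hx => (hu'' x hx).continuousWithinAt) (interior_deriv hu') (interior_deriv hu'')
    (fun x hx => hODE x (Ioo_subset_Icc_self hx)) h0 h0'
  rw [show k⁻¹ = m from inv_div _ _] at henergy
  have hI (s : ℝ) (hs : s ∈ Icc 0 S) : 0 ≤ ∫ t in (0:ℝ)..s, (u' t)^2 :=
    intervalIntegral.integral_nonneg hs.1 fun t _ => sq_nonneg _
  have part1 : ∀ s ∈ Icc (0:ℝ) S,
      (1/2) * (u' s)^2 + (β / (4 * Real.sqrt ω)) * (∫ t in (0:ℝ)..s, (u' t)^2)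
        ≤ (S * Real.sqrt ω / (2 * β)) * (α^2 + 1) + m * (1 + S * Real.sqrt ω / β)^2 * S := by
    intro s hs
    have hmS : 0 ≤ m * S := mul_nonneg hm.le (hs.1.trans hs.2)
    have hCs := mul_le_mul_of_nonneg_left hs.2 (by positivity : 0 ≤ m * (α ^ 2 / 2 + m * S + 1))
    rw [show S * Real.sqrt ω / (2 * β) = m * S / 2 by ring, show S * Real.sqrt ω / β = m * S by ring,
      show β / (4 * Real.sqrt ω) = k / 4 by ring]
    nlinarith [henergy s hs, mul_nonneg hk.le (hI s hs), pow_nonneg hmS 2, pow_nonneg hmS 3]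
  refine ⟨part1, fun s hs => Real.abs_le_sqrt ?_⟩
  nlinarith [part1 s hs, mul_nonneg (div_pos hβ (by positivity : 0 < 4 * Real.sqrt ω)).le (hI s hs)]

/-- The ε-independent energy bound for solutions of the regularized Washburn
equation `u_ε'' + (β/√ω)u_ε' + √(2[u_ε]₊ + ε) = 1`. -/
theorem stmt_3
    (β ω α S ε : ℝ) (hβ : 0 < β) (hω : 0 < ω) (hα : 0 ≤ α) (hS : 0 < S)
    (hε : ε ∈ Ioo (0:ℝ) 1)
    (u u' u'' : ℝ → ℝ)
    (hu' : ∀ s ∈ Icc (0:ℝ) S, HasDerivWithinAt u (u' s) (Icc 0 S) s)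
    (hu'' : ∀ s ∈ Icc (0:ℝ) S, HasDerivWithinAt u' (u'' s) (Icc 0 S) s)
    (hu''c : ContinuousOn u'' (Icc 0 S))
    (hODE : ∀ s ∈ Icc (0:ℝ) S,
      u'' s + (β / Real.sqrt ω) * u' s + Real.sqrt (2 * max (u s) 0 + ε) = 1)
    (h0 : u 0 = α^2 / 2) (h0' : u' 0 = 0) :
    (∀ s ∈ Icc (0:ℝ) S,
      (1/2) * (u' s)^2 + (β / (4 * Real.sqrt ω)) * (∫ t in (0:ℝ)..s, (u' t)^2)
        ≤ (S * Real.sqrt ω / (2 * β)) * (α^2 + 1)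
          + (Real.sqrt ω / β) * (1 + S * Real.sqrt ω / β)^2 * S) ∧
    (∀ s ∈ Icc (0:ℝ) S,
      |u' s| ≤ Real.sqrt (2 * ((S * Real.sqrt ω / (2 * β)) * (α^2 + 1)
          + (Real.sqrt ω / β) * (1 + S * Real.sqrt ω / β)^2 * S))) :=
  stmt_3_general β ω α S ε hβ hω hε u u' u'' hu' hu'' hODE h0 h0'
end

section
/- Let β > 0, ω > 0, S > 0 and α ∈ [0, 3/2]. If u : [0, S] → ℝ is a twice continuously differentiable nonnegative solution of u'' + (β/√ω)·u' + √(2u) = 1 with u(0) = α²/2 and u'(0) = 0, then 0 < u(s) < 9/8 for all s ∈ (0, S]; moreover u(s) > 0 for all s ∈ [0, S] when α ∈ (0, 3/2], and u(s) ≤ 9/8 for all s ∈ [0, S] (with strict inequality u(s) < 9/8 on [0, S] when α ∈ [0, 3/2)). -/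
open Set

lemma mulsqrt_deriv {w : ℝ} (hw : 0 ≤ w) :
    HasDerivWithinAt (fun x => x * Real.sqrt x) ((3/2) * Real.sqrt w) (Ici 0) w := by
  rcases eq_or_lt_of_le hw with h | h
  · subst h
    rw [hasDerivWithinAt_iff_tendsto_slope]
    have : ∀ y ∈ Ici (0:ℝ) \ {0}, slope (fun x => x * Real.sqrt x) 0 y = Real.sqrt y := by
      intro y hy
      have hy0 : y ≠ 0 := hy.2
      simp only [slope_def_field]
      rw [div_eq_iff (sub_ne_zero.2 hy0)]
      ring
    have h2 : Filter.Tendsto Real.sqrt (nhdsWithin 0 (Ici 0 \ {0})) (nhds (3/2 * Real.sqrt 0)) := by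
      have h1 : Filter.Tendsto Real.sqrt (nhdsWithin 0 (Ici 0 \ {0})) (nhds (Real.sqrt 0)) :=
        ((Real.continuous_sqrt.continuousAt (x := (0:ℝ))).tendsto).mono_left nhdsWithin_le_nhds
      simpa using h1
    exact h2.congr' (Filter.eventuallyEq_of_mem self_mem_nhdsWithin this).symm
  · have hs : HasDerivAt Real.sqrt (1 / (2 * Real.sqrt w)) w := Real.hasDerivAt_sqrt (ne_of_gt h)
    have := (hasDerivAt_id w).mul hs
    have heq : 1 * Real.sqrt w + w * (1 / (2 * Real.sqrt w)) = (3/2) * Real.sqrt w := by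
      have hsw : 0 < Real.sqrt w := Real.sqrt_pos.2 h
      have : w = Real.sqrt w * Real.sqrt w := (Real.mul_self_sqrt hw).symm
      field_simp
      nlinarith [Real.sq_sqrt hw]
    simp only [id] at this
    rw [heq] at this
    exact this.hasDerivWithinAt


/-- Positivity and the upper bound 9/8 for nonnegative C² solutions of the
transformed Washburn initial-value problem, `α ∈ [0, 3/2]`. -/
theorem stmt_6
    (β ω S α : ℝ) (hβ : 0 < β) (hω : 0 < ω) (hS : 0 < S)
    (hα : α ∈ Icc (0:ℝ) (3/2))
    (u u' u'' : ℝ → ℝ)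
    (hu1 : ∀ s ∈ Icc (0:ℝ) S, HasDerivWithinAt u (u' s) (Icc 0 S) s)
    (hu2 : ∀ s ∈ Icc (0:ℝ) S, HasDerivWithinAt u' (u'' s) (Icc 0 S) s)
    (hu3 : ContinuousOn u'' (Icc 0 S))
    (hunn : ∀ s ∈ Icc (0:ℝ) S, 0 ≤ u s)
    (hODE : ∀ s ∈ Icc (0:ℝ) S,
      u'' s + (β / Real.sqrt ω) * u' s + Real.sqrt (2 * u s) = 1)
    (h0 : u 0 = α^2 / 2) (h0' : u' 0 = 0) :
    (∀ s ∈ Ioc (0:ℝ) S, 0 < u s ∧ u s < 9/8) ∧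
    (0 < α → ∀ s ∈ Icc (0:ℝ) S, 0 < u s) ∧
    (∀ s ∈ Icc (0:ℝ) S, u s ≤ 9/8) ∧
    (α < 3/2 → ∀ s ∈ Icc (0:ℝ) S, u s < 9/8) := by
  obtain ⟨hα0, hα2⟩ := hα
  set c : ℝ := β / Real.sqrt ω with hc_def
  have hc : 0 < c := div_pos hβ (Real.sqrt_pos.2 hω)
  set E : ℝ → ℝ := fun s => (u' s)^2 / 2 + (2 * u s) * Real.sqrt (2 * u s) / 3 - u s with hE_def
  -- derivative of E within Icc 0 S
  have hE : ∀ s ∈ Icc (0:ℝ) S, HasDerivWithinAt E (-c * (u' s)^2) (Icc 0 S) s := by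
    intro s hs
    have h2u : HasDerivWithinAt (fun t => 2 * u t) (2 * u' s) (Icc 0 S) s :=
      (hu1 s hs).const_mul 2
    have hmaps : MapsTo (fun t => 2 * u t) (Icc 0 S) (Ici 0) := by
      intro t ht
      show (0:ℝ) ≤ 2 * u t
      linarith [hunn t ht]
    have hg : HasDerivWithinAt (fun t => (2 * u t) * Real.sqrt (2 * u t))
        ((3/2) * Real.sqrt (2 * u s) * (2 * u' s)) (Icc 0 S) s := by
      have := (mulsqrt_deriv (by linarith [hunn s hs])).comp s h2u hmaps
      simpa only [Function.comp_def] using this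
    have hsq : HasDerivWithinAt (fun t => (u' t)^2 / 2) (u' s * u'' s) (Icc 0 S) s := by
      have := ((hu2 s hs).fun_pow 2).div_const 2
      exact this.congr_deriv (by push_cast; ring)
    have htot : HasDerivWithinAt E
        (u' s * u'' s + (3/2) * Real.sqrt (2 * u s) * (2 * u' s) / 3 - u' s) (Icc 0 S) s :=
      (hsq.add (hg.div_const 3)).sub (hu1 s hs)
    convert htot using 1
    have hode := hODE s hs
    have : u'' s = 1 - c * u' s - Real.sqrt (2 * u s) := by rw [hc_def] at *; linarith
    rw [this]; ring
  have hEcont : ContinuousOn E (Icc 0 S) := fun s hs => (hE s hs).continuousWithinAt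
  have hintS : interior (Icc (0:ℝ) S) = Ioo 0 S := interior_Icc
  -- E is antitone on Icc 0 S
  have hEanti : AntitoneOn E (Icc 0 S) := by
    apply antitoneOn_of_deriv_nonpos (convex_Icc 0 S) hEcont
    · intro x hx
      rw [hintS] at hx
      exact (((hE x ⟨le_of_lt hx.1, le_of_lt hx.2⟩).hasDerivAt
        (Icc_mem_nhds hx.1 hx.2)).differentiableAt).differentiableWithinAt
    · intro x hx
      rw [hintS] at hx
      have := ((hE x ⟨le_of_lt hx.1, le_of_lt hx.2⟩).hasDerivAt (Icc_mem_nhds hx.1 hx.2)).deriv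
      rw [this]
      nlinarith [sq_nonneg (u' x)]
  have hE0 : E 0 = α^3/3 - α^2/2 := by
    have hsq : Real.sqrt (2 * u 0) = α := by
      rw [h0, show 2*(α^2/2) = α^2 by ring, Real.sqrt_sq hα0]
    show (u' 0)^2/2 + (2 * u 0) * Real.sqrt (2 * u 0)/3 - u 0 = _
    rw [hsq, h0, h0']; ring
  have hE0le : E 0 ≤ 0 := by rw [hE0]; nlinarith
  -- Key: no point s₀ ∈ Ioc 0 S can have E s₀ ≥ 0
  have K : ∀ s₀ ∈ Ioc (0:ℝ) S, 0 ≤ E s₀ → False := by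
    intro s₀ hs₀ hEnn
    have hs₀m : s₀ ∈ Icc (0:ℝ) S := ⟨le_of_lt hs₀.1, hs₀.2⟩
    have h0m : (0:ℝ) ∈ Icc (0:ℝ) S := ⟨le_refl 0, le_of_lt hS⟩
    have hle : E s₀ ≤ E 0 := hEanti h0m hs₀m (le_of_lt hs₀.1)
    have hEeq : E s₀ = E 0 := le_antisymm hle (by linarith)
    have hE00 : E 0 = 0 := by linarith
    -- E constant on Icc 0 s₀
    have hEconst : ∀ s ∈ Icc (0:ℝ) s₀, E s = 0 := by
      intro s hs
      have hsm : s ∈ Icc (0:ℝ) S := ⟨hs.1, le_trans hs.2 hs₀.2⟩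
      have h1 : E s ≤ E 0 := hEanti h0m hsm hs.1
      have h2 : E s₀ ≤ E s := hEanti hsm hs₀m hs.2
      linarith
    -- u' = 0 on Ioo 0 s₀
    have hu'0 : ∀ s ∈ Ioo (0:ℝ) s₀, u' s = 0 := by
      intro s hs
      have hsS : s ∈ Ioo (0:ℝ) S := ⟨hs.1, lt_of_lt_of_le hs.2 hs₀.2⟩
      have hd : HasDerivAt E (-c * (u' s)^2) s :=
        (hE s ⟨le_of_lt hsS.1, le_of_lt hsS.2⟩).hasDerivAt (Icc_mem_nhds hsS.1 hsS.2)
      have hloc : E =ᶠ[nhds s] (fun _ => (0:ℝ)) := by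
        have : Ioo (0:ℝ) s₀ ∈ nhds s := Ioo_mem_nhds hs.1 hs.2
        filter_upwards [this] with t ht
        exact hEconst t ⟨le_of_lt ht.1, le_of_lt ht.2⟩
      have hd0 : HasDerivAt (fun _ => (0:ℝ)) (-c * (u' s)^2) s := hd.congr_of_eventuallyEq hloc.symm
      have huniq := hd0.unique (hasDerivAt_const s 0)
      have hsq0 : (u' s)^2 = 0 := by
        rcases mul_eq_zero.1 (by linarith : c * (u' s)^2 = 0) with h | h
        · exact absurd h (ne_of_gt hc)
        · exact h
      exact pow_eq_zero_iff (n := 2) (by norm_num) |>.1 hsq0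
    -- u constant on Icc 0 s₀
    have hucont : ContinuousOn u (Icc 0 s₀) := fun s hs =>
      ((hu1 s ⟨hs.1, le_trans hs.2 hs₀.2⟩).continuousWithinAt).mono (Icc_subset_Icc le_rfl hs₀.2)
    have hconstu : ∀ s ∈ Icc (0:ℝ) s₀, u s = u 0 := by
      have hderiv : ∀ x ∈ interior (Icc (0:ℝ) s₀), HasDerivAt u 0 x := by
        intro x hx
        rw [interior_Icc] at hx
        have hxS : x ∈ Ioo (0:ℝ) S := ⟨hx.1, lt_of_lt_of_le hx.2 hs₀.2⟩
        have := (hu1 x ⟨le_of_lt hxS.1, le_of_lt hxS.2⟩).hasDerivAt (Icc_mem_nhds hxS.1 hxS.2)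
        rwa [hu'0 x hx] at this
      have hmono : MonotoneOn u (Icc 0 s₀) := by
        apply monotoneOn_of_deriv_nonneg (convex_Icc 0 s₀) hucont
        · exact fun x hx => ((hderiv x hx).differentiableAt).differentiableWithinAt
        · intro x hx; rw [(hderiv x hx).deriv]
      have hanti : AntitoneOn u (Icc 0 s₀) := by
        apply antitoneOn_of_deriv_nonpos (convex_Icc 0 s₀) hucont
        · exact fun x hx => ((hderiv x hx).differentiableAt).differentiableWithinAt
        · intro x hx; rw [(hderiv x hx).deriv]
      intro s hs
      have h0m' : (0:ℝ) ∈ Icc (0:ℝ) s₀ := ⟨le_refl 0, le_of_lt hs₀.1⟩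
      exact le_antisymm (hanti h0m' hs hs.1) (hmono h0m' hs hs.1)
    -- evaluate ODE at s₀/2
    set s₁ : ℝ := s₀ / 2 with hs₁def
    have hs₁ : s₁ ∈ Ioo (0:ℝ) s₀ := ⟨by rw [hs₁def]; linarith [hs₀.1], by rw [hs₁def]; linarith [hs₀.1]⟩
    have hs₁S : s₁ ∈ Ioo (0:ℝ) S := ⟨hs₁.1, lt_of_lt_of_le hs₁.2 hs₀.2⟩
    have hs₁m : s₁ ∈ Icc (0:ℝ) S := ⟨le_of_lt hs₁S.1, le_of_lt hs₁S.2⟩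
    have hu''0 : u'' s₁ = 0 := by
      have hd : HasDerivAt u' (u'' s₁) s₁ := (hu2 s₁ hs₁m).hasDerivAt (Icc_mem_nhds hs₁S.1 hs₁S.2)
      have hloc : u' =ᶠ[nhds s₁] (fun _ => (0:ℝ)) := by
        have : Ioo (0:ℝ) s₀ ∈ nhds s₁ := Ioo_mem_nhds hs₁.1 hs₁.2
        filter_upwards [this] with t ht
        exact hu'0 t ht
      have hd0 : HasDerivAt (fun _ => (0:ℝ)) (u'' s₁) s₁ := hd.congr_of_eventuallyEq hloc.symm
      exact hd0.unique (hasDerivAt_const s₁ 0)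
    have hode := hODE s₁ hs₁m
    rw [hu''0, hu'0 s₁ hs₁] at hode
    have hsq1 : Real.sqrt (2 * u s₁) = 1 := by linarith [hode]
    have h2u1 : 2 * u s₁ = 1 := by
      have := Real.sq_sqrt (by linarith [hunn s₁ hs₁m] : (0:ℝ) ≤ 2 * u s₁)
      rw [hsq1] at this
      nlinarith
    have hu0 : u 0 = 1/2 := by
      have := hconstu s₁ ⟨le_of_lt hs₁.1, le_of_lt hs₁.2⟩
      linarith
    -- then E 0 = 1/3 - 1/2 = -1/6 ≠ 0
    have hEval : E 0 = -(1/6) := by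
      have h1 : Real.sqrt (2 * u 0) = 1 := by rw [hu0]; norm_num
      show (u' 0)^2/2 + (2 * u 0) * Real.sqrt (2 * u 0)/3 - u 0 = _
      rw [h1, hu0, h0']; ring
    rw [hE00] at hEval
    norm_num at hEval
  -- Facts: E s ≥ sign expression
  have hElb : ∀ s ∈ Icc (0:ℝ) S, ∀ q : ℝ, q = Real.sqrt (2 * u s) →
      E s = (u' s)^2/2 + q^3/3 - q^2/2 := by
    intro s hs q hq
    have hq2 : q^2 = 2 * u s := by rw [hq]; exact Real.sq_sqrt (by linarith [hunn s hs])
    have h3 : q^3 = (2 * u s) * q := by rw [← hq2]; ring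
    show (u' s)^2/2 + (2 * u s) * Real.sqrt (2 * u s)/3 - u s = _
    rw [← hq]
    linarith [h3, hq2]
  -- positivity on Ioc
  have hpos : ∀ s ∈ Ioc (0:ℝ) S, 0 < u s := by
    intro s hs
    have hsm : s ∈ Icc (0:ℝ) S := ⟨le_of_lt hs.1, hs.2⟩
    rcases lt_or_eq_of_le (hunn s hsm) with h | h
    · exact h
    · exfalso
      apply K s hs
      have hq : Real.sqrt (2 * u s) = 0 := by rw [← h]; simp
      have := hElb s hsm 0 (by rw [hq])
      rw [this]
      nlinarith [sq_nonneg (u' s)]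
  -- u < 9/8 on Ioc
  have hub : ∀ s ∈ Ioc (0:ℝ) S, u s < 9/8 := by
    intro s hs
    have hsm : s ∈ Icc (0:ℝ) S := ⟨le_of_lt hs.1, hs.2⟩
    by_contra hcon
    push_neg at hcon
    apply K s hs
    set q : ℝ := Real.sqrt (2 * u s) with hqdef
    have hq32 : (3/2 : ℝ) ≤ q := by
      rw [hqdef]
      have : Real.sqrt (9/4) ≤ Real.sqrt (2 * u s) := Real.sqrt_le_sqrt (by linarith)
      calc (3/2:ℝ) = Real.sqrt (9/4) := by
            rw [show (9/4:ℝ) = (3/2)^2 by norm_num, Real.sqrt_sq (by norm_num)]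
        _ ≤ _ := this
    have := hElb s hsm q rfl
    rw [this]
    nlinarith [sq_nonneg (u' s), sq_nonneg q]
  refine ⟨fun s hs => ⟨hpos s hs, hub s hs⟩, ?_, ?_, ?_⟩
  · intro hαpos s hs
    rcases eq_or_lt_of_le hs.1 with h | h
    · have : u s = α^2/2 := by rw [← h, h0]
      rw [this]; positivity
    · exact hpos s ⟨h, hs.2⟩
  · intro s hs
    rcases eq_or_lt_of_le hs.1 with h | h
    · have : u s = α^2/2 := by rw [← h, h0]
      rw [this]; nlinarith
    · exact le_of_lt (hub s ⟨h, hs.2⟩)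
  · intro hα32 s hs
    rcases eq_or_lt_of_le hs.1 with h | h
    · have : u s = α^2/2 := by rw [← h, h0]
      rw [this]; nlinarith
    · exact hub s ⟨h, hs.2⟩
end

section
/- Let β > 0, ω > 0, S > 0 and α ∈ [0, 3/2]. If u : [0, S] → ℝ is a twice continuously differentiable nonnegative solution of u'' + (β/√ω)·u' + √(2u) = 1 with u(0) = α²/2 and u'(0) = 0, then the energy E(s) := (1/2)·u'(s)² − u(s) + (2√2/3)·u(s)^{3/2} is strictly negative for every s ∈ (0, S]. -/
open Set

/-- Strict negativity of the energy
`E(s) = (1/2)u'(s)² − u(s) + (2√2/3)u(s)^{3/2}` on `(0, S]` along a nonnegative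
C² solution of the transformed Washburn problem with `α ∈ [0, 3/2]`. -/
theorem stmt_8
    (β ω S α : ℝ) (hβ : 0 < β) (hω : 0 < ω) (hS : 0 < S)
    (hα : α ∈ Icc (0:ℝ) (3/2))
    (u u' u'' : ℝ → ℝ)
    (hu1 : ∀ s ∈ Icc (0:ℝ) S, HasDerivWithinAt u (u' s) (Icc 0 S) s)
    (hu2 : ∀ s ∈ Icc (0:ℝ) S, HasDerivWithinAt u' (u'' s) (Icc 0 S) s)
    (hu3 : ContinuousOn u'' (Icc 0 S))
    (hunn : ∀ s ∈ Icc (0:ℝ) S, 0 ≤ u s)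
    (hODE : ∀ s ∈ Icc (0:ℝ) S,
      u'' s + (β / Real.sqrt ω) * u' s + Real.sqrt (2 * u s) = 1)
    (h0 : u 0 = α^2 / 2) (h0' : u' 0 = 0) :
    ∀ s ∈ Ioc (0:ℝ) S,
      (1/2) * (u' s)^2 - u s + (2 * Real.sqrt 2 / 3) * (u s) ^ ((3:ℝ)/2) < 0 := by
  obtain ⟨hα0, hα2⟩ := hα
  set c : ℝ := β / Real.sqrt ω with hc
  have hcpos : 0 < c := div_pos hβ (Real.sqrt_pos.mpr hω)
  set E : ℝ → ℝ :=
    fun s => (1/2) * (u' s)^2 - u s + (2 * Real.sqrt 2 / 3) * (u s) ^ ((3:ℝ)/2) with hEdef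
  -- derivative of E
  have hE' : ∀ t ∈ Icc (0:ℝ) S, HasDerivWithinAt E (-(c * (u' t)^2)) (Icc 0 S) t := by
    intro t ht
    have h1 := hu1 t ht
    have h2 := hu2 t ht
    have hrpow : HasDerivWithinAt (fun s => (u s) ^ ((3:ℝ)/2))
        (((3:ℝ)/2 * (u t) ^ ((3:ℝ)/2 - 1)) * u' t) (Icc 0 S) t :=
      (Real.hasDerivAt_rpow_const (Or.inr (by norm_num))).comp_hasDerivWithinAt t h1
    have hder := (((h2.pow 2).const_mul ((1:ℝ)/2)).sub h1).add
      (hrpow.const_mul (2 * Real.sqrt 2 / 3))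
    convert hder using 1
    case e'_4 => rfl
    case e'_5 => rfl
    case e'_8 => rfl
    have hode := hODE t ht
    have hsq : Real.sqrt (2 * u t) = Real.sqrt 2 * (u t) ^ ((3:ℝ)/2 - 1) := by
      rw [Real.sqrt_mul (by norm_num : (0:ℝ) ≤ 2)]
      congr 1
      rw [Real.sqrt_eq_rpow]
      norm_num
    have hu'' : u'' t = 1 - c * u' t - Real.sqrt 2 * (u t) ^ ((3:ℝ)/2 - 1) := by
      rw [← hsq]; linarith
    rw [hu'']
    push_cast
    ring
  have hEcont : ContinuousOn E (Icc 0 S) := fun t ht => (hE' t ht).continuousWithinAt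
  have hanti : AntitoneOn E (Icc 0 S) := by
    apply antitoneOn_of_hasDerivWithinAt_nonpos (convex_Icc 0 S) hEcont
    · intro t ht
      exact ((hE' t (interior_subset ht)).mono interior_subset)
    · intro t _
      have : 0 ≤ c * (u' t)^2 := by positivity
      linarith
  -- E 0 value
  have hpow : ∀ x : ℝ, 0 ≤ x → (x^2) ^ ((3:ℝ)/2) = x^3 := by
    intro x hx
    rw [← Real.rpow_natCast x 2, ← Real.rpow_mul hx]
    norm_num
  have hs2 : (0:ℝ) < Real.sqrt 2 := Real.sqrt_pos.mpr (by norm_num)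
  have hs2sq : Real.sqrt 2 ^ 2 = 2 := Real.sq_sqrt (by norm_num)
  have hu0 : u 0 = (α / Real.sqrt 2)^2 := by
    rw [h0, div_pow, hs2sq]
  have hE0 : E 0 = α^3/3 - α^2/2 := by
    have hcube : (Real.sqrt 2)^3 = 2 * Real.sqrt 2 := by
      rw [pow_succ, hs2sq]
    have e1 : (α/Real.sqrt 2)^2 = α^2/2 := by rw [div_pow, hs2sq]
    have e2 : (α/Real.sqrt 2)^3 = α^3/(2 * Real.sqrt 2) := by rw [div_pow, hcube]
    simp only [hEdef]
    rw [h0', hu0, hpow _ (by positivity), e2, e1]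
    field_simp
    ring
  have hE0le : E 0 ≤ 0 := by rw [hE0]; nlinarith [sq_nonneg α]
  -- main argument
  intro s hs
  by_contra hcon
  push_neg at hcon
  have hsmem : s ∈ Icc (0:ℝ) S := ⟨hs.1.le, hs.2⟩
  have h0mem : (0:ℝ) ∈ Icc (0:ℝ) S := ⟨le_rfl, hS.le⟩
  have hEs : (0:ℝ) ≤ E s := hcon
  have hEsle : E s ≤ E 0 := hanti h0mem hsmem hs.1.le
  have hE0z : E 0 = 0 := le_antisymm hE0le (le_trans hEs hEsle)
  have hEsz : E s = 0 := le_antisymm (hEsle.trans hE0le) hEs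
  have hsub : Icc (0:ℝ) s ⊆ Icc (0:ℝ) S := Icc_subset_Icc le_rfl hs.2
  have hEzero : ∀ t ∈ Icc (0:ℝ) s, E t = 0 := by
    intro t ht
    have h1 : E t ≤ E 0 := hanti h0mem (hsub ht) ht.1
    have h2 : E s ≤ E t := hanti (hsub ht) hsmem ht.2
    rw [hE0z] at h1; rw [hEsz] at h2
    linarith
  have hud : UniqueDiffOn ℝ (Icc (0:ℝ) s) := uniqueDiffOn_Icc hs.1
  have hu'zero : ∀ t ∈ Icc (0:ℝ) s, u' t = 0 := by
    intro t ht
    have hd1 : HasDerivWithinAt E (-(c * (u' t)^2)) (Icc 0 s) t :=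
      (hE' t (hsub ht)).mono hsub
    have hd2 : HasDerivWithinAt E 0 (Icc 0 s) t :=
      (hasDerivWithinAt_const t (Icc 0 s) (0:ℝ)).congr
        (fun y hy => hEzero y hy) (hEzero t ht)
    have := hd1.derivWithin (hud t ht)
    rw [hd2.derivWithin (hud t ht)] at this
    have h2 : c * (u' t)^2 = 0 := by linarith
    have : (u' t)^2 = 0 := by
      rcases mul_eq_zero.mp h2 with h | h
      · exact absurd h hcpos.ne'
      · exact h
    exact pow_eq_zero_iff (n := 2) (by norm_num) |>.mp this
  have h0s : (0:ℝ) ∈ Icc (0:ℝ) s := ⟨le_rfl, hs.1.le⟩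
  have hu''0 : u'' 0 = 0 := by
    have hd1 : HasDerivWithinAt u' (u'' 0) (Icc 0 s) 0 := (hu2 0 h0mem).mono hsub
    have hd2 : HasDerivWithinAt u' 0 (Icc 0 s) 0 :=
      (hasDerivWithinAt_const 0 (Icc 0 s) (0:ℝ)).congr
        (fun y hy => hu'zero y hy) (hu'zero 0 h0s)
    have := hd1.derivWithin (hud 0 h0s)
    rw [hd2.derivWithin (hud 0 h0s)] at this
    linarith
  have hode0 := hODE 0 h0mem
  rw [hu''0, h0', mul_zero, zero_add, zero_add] at hode0
  have h2u0 : 2 * u 0 = 1 := by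
    have := Real.sq_sqrt (show (0:ℝ) ≤ 2 * u 0 by
      have := hunn 0 h0mem; linarith)
    rw [hode0] at this
    nlinarith
  have hαsq : α^2 = 1 := by rw [h0] at h2u0; linarith
  have hα1 : α = 1 := by
    have : (α - 1) * (α + 1) = 0 := by linear_combination hαsq
    rcases mul_eq_zero.mp this with h | h
    · linarith
    · linarith
  have hfin : α^3/3 - α^2/2 = 0 := by rw [← hE0]; exact hE0z
  rw [hα1] at hfin
  norm_num at hfin
end

section
/- Let β > 0, ω > 0, S > 0 and α ≥ 0, and let u : [0, S] → ℝ be continuous and nonnegative. Then u is twice continuously differentiable and satisfies u'' + (β/√ω)·u' + √(2u) = 1 on [0, S] with u(0) = α²/2 and u'(0) = 0 if and only if u satisfies the nonlinear Volterra integral equation u(s) = α²/2 + ∫₀ˢ (√ω/β)·(1 − e^{−β(s−t)/√ω})·(1 − √(2u(t))) dt for all s ∈ [0, S]; in that case moreover u'(s) = e^{−βs/√ω}·∫₀ˢ e^{βt/√ω}·(1 − √(2u(t))) dt for all s ∈ [0, S]. -/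
open Set

/-- Equivalence of the transformed Washburn initial-value problem with the
nonlinear Volterra integral equation, together with the formula for `u'`. -/
theorem stmt_9
    (β ω α S : ℝ) (hβ : 0 < β) (hω : 0 < ω) (hα : 0 ≤ α) (hS : 0 < S)
    (u : ℝ → ℝ) (huc : ContinuousOn u (Icc 0 S))
    (hunn : ∀ s ∈ Icc (0:ℝ) S, 0 ≤ u s) :
    ((∃ u' u'' : ℝ → ℝ,
        (∀ s ∈ Icc (0:ℝ) S, HasDerivWithinAt u (u' s) (Icc 0 S) s) ∧
        (∀ s ∈ Icc (0:ℝ) S, HasDerivWithinAt u' (u'' s) (Icc 0 S) s) ∧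
        ContinuousOn u'' (Icc 0 S) ∧
        (∀ s ∈ Icc (0:ℝ) S,
          u'' s + (β / Real.sqrt ω) * u' s + Real.sqrt (2 * u s) = 1) ∧
        u 0 = α^2 / 2 ∧ u' 0 = 0)
      ↔
      (∀ s ∈ Icc (0:ℝ) S,
        u s = α^2 / 2 + ∫ t in (0:ℝ)..s,
          (Real.sqrt ω / β) * (1 - Real.exp (-β * (s - t) / Real.sqrt ω))
            * (1 - Real.sqrt (2 * u t)))) ∧
    (∀ u' u'' : ℝ → ℝ,
      ((∀ s ∈ Icc (0:ℝ) S, HasDerivWithinAt u (u' s) (Icc 0 S) s) ∧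
       (∀ s ∈ Icc (0:ℝ) S, HasDerivWithinAt u' (u'' s) (Icc 0 S) s) ∧
       ContinuousOn u'' (Icc 0 S) ∧
       (∀ s ∈ Icc (0:ℝ) S,
         u'' s + (β / Real.sqrt ω) * u' s + Real.sqrt (2 * u s) = 1) ∧
       u 0 = α^2 / 2 ∧ u' 0 = 0) →
      ∀ s ∈ Icc (0:ℝ) S,
        u' s = Real.exp (-β * s / Real.sqrt ω) * ∫ t in (0:ℝ)..s,
          Real.exp (β * t / Real.sqrt ω) * (1 - Real.sqrt (2 * u t))) := by
  have hc : 0 < Real.sqrt ω := Real.sqrt_pos.mpr hω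
  set c := Real.sqrt ω with hcdef
  set k := β / c with hkdef
  have hk : 0 < k := div_pos hβ hc
  have hk0 : k ≠ 0 := hk.ne'
  -- clamp to [0,S]
  set cl : ℝ → ℝ := fun t => max 0 (min t S) with hcldef
  have hclc : Continuous cl := continuous_const.max (continuous_id.min continuous_const)
  have hclm : ∀ t, cl t ∈ Icc (0:ℝ) S :=
    fun t => ⟨le_max_left _ _, max_le hS.le (min_le_right _ _)⟩
  have hcleq : ∀ t ∈ Icc (0:ℝ) S, cl t = t := by
    intro t ht
    simp only [hcldef]
    rw [min_eq_left ht.2, max_eq_right ht.1]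
  set f : ℝ → ℝ := fun t => 1 - Real.sqrt (2 * u (cl t)) with hfdef
  have hfc : Continuous f := by
    apply continuous_const.sub
    exact Real.continuous_sqrt.comp
      (continuous_const.mul (huc.comp_continuous hclc hclm))
  have hf_eq : ∀ t ∈ Icc (0:ℝ) S, f t = 1 - Real.sqrt (2 * u t) := by
    intro t ht; simp only [hfdef, hcleq t ht]
  -- F s = ∫₀ˢ e^{kt} f t
  have hgc : Continuous (fun t => Real.exp (k * t) * f t) :=
    (Real.continuous_exp.comp (continuous_const.mul continuous_id)).mul hfc
  set F : ℝ → ℝ := fun s => ∫ t in (0:ℝ)..s, Real.exp (k * t) * f t with hFdef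
  have hFd : ∀ s, HasDerivAt F (Real.exp (k * s) * f s) s := by
    intro s
    exact (hgc.integral_hasStrictDerivAt 0 s).hasDerivAt
  have hFc : Continuous F := by
    rw [continuous_iff_continuousAt]; exact fun s => (hFd s).continuousAt
  have hF0 : F 0 = 0 := intervalIntegral.integral_same
  set v : ℝ → ℝ := fun s => Real.exp (-(k * s)) * F s with hvdef
  have hed : ∀ s, HasDerivAt (fun s : ℝ => Real.exp (-(k * s))) (-k * Real.exp (-(k * s))) s := by
    intro s
    have h1 : HasDerivAt (fun s : ℝ => -(k * s)) (-k) s := by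
      simpa using ((hasDerivAt_id s).const_mul k).fun_neg
    simpa [mul_comm] using h1.exp
  have hvd : ∀ s, HasDerivAt v (f s - k * v s) s := by
    intro s
    have h := (hed s).fun_mul (hFd s)
    have hee : Real.exp (-(k * s)) * Real.exp (k * s) = 1 := by
      rw [← Real.exp_add]; simp
    refine h.congr_deriv ?_; symm
    simp only [hvdef]
    linear_combination (-(f s)) * hee
  have hvc : Continuous v := by
    rw [continuous_iff_continuousAt]; exact fun s => (hvd s).continuousAt
  have hv0 : v 0 = 0 := by simp [hvdef, hF0]
  set G : ℝ → ℝ := fun s => α ^ 2 / 2 + (1 / k) * (∫ t in (0:ℝ)..s, f t) - (1 / k) * v s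
    with hGdef
  have hGd : ∀ s, HasDerivAt G (v s) s := by
    intro s
    have hI : HasDerivAt (fun s => ∫ t in (0:ℝ)..s, f t) (f s) s :=
      (hfc.integral_hasStrictDerivAt 0 s).hasDerivAt
    have h := ((hI.const_mul (1 / k)).const_add (α ^ 2 / 2)).fun_sub ((hvd s).const_mul (1 / k))
    refine h.congr_deriv ?_; symm
    field_simp
    ring
  have hGc : Continuous G := by
    rw [continuous_iff_continuousAt]; exact fun s => (hGd s).continuousAt
  have hG0 : G 0 = α ^ 2 / 2 := by
    simp [hGdef, hv0, intervalIntegral.integral_same]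
  -- the integral equation's right-hand side equals G
  have hGeq : ∀ s ∈ Icc (0:ℝ) S,
      (α ^ 2 / 2 + ∫ t in (0:ℝ)..s,
        (c / β) * (1 - Real.exp (-β * (s - t) / c)) * (1 - Real.sqrt (2 * u t))) = G s := by
    intro s hs
    have h1 : ∀ t ∈ uIcc (0:ℝ) s,
        (c / β) * (1 - Real.exp (-β * (s - t) / c)) * (1 - Real.sqrt (2 * u t))
          = (1 / k) * f t - (1 / k) * Real.exp (-(k * s)) * (Real.exp (k * t) * f t) := by
      intro t ht
      rw [uIcc_of_le hs.1] at ht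
      have htI : t ∈ Icc (0:ℝ) S := ⟨ht.1, ht.2.trans hs.2⟩
      rw [← hf_eq t htI]
      have h2 : -β * (s - t) / c = -(k * s) + k * t := by
        rw [hkdef]; field_simp; ring
      rw [h2, Real.exp_add]
      have h3 : c / β = 1 / k := by rw [hkdef, one_div_div]
      rw [h3]; ring
    rw [intervalIntegral.integral_congr h1,
      intervalIntegral.integral_sub ((continuous_const.fun_mul hfc).intervalIntegrable 0 s)
        ((continuous_const.fun_mul hgc).intervalIntegrable 0 s),
      intervalIntegral.integral_const_mul, intervalIntegral.integral_const_mul]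
    simp only [hGdef, hvdef, hFdef]
    ring
  have hmem : ∀ x ∈ Ico (0:ℝ) S, Icc (0:ℝ) S ∈ nhdsWithin x (Ici x) := by
    intro x hx
    rw [mem_nhdsWithin]
    exact ⟨Iio S, isOpen_Iio, hx.2, fun y hy => ⟨hx.1.trans hy.2, hy.1.le⟩⟩
  -- key lemma: u' = v on [0, S]
  have lemA : ∀ u' u'' : ℝ → ℝ,
      (∀ s ∈ Icc (0:ℝ) S, HasDerivWithinAt u (u' s) (Icc 0 S) s) →
      (∀ s ∈ Icc (0:ℝ) S, HasDerivWithinAt u' (u'' s) (Icc 0 S) s) →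
      (∀ s ∈ Icc (0:ℝ) S, u'' s + k * u' s + Real.sqrt (2 * u s) = 1) →
      u' 0 = 0 → ∀ s ∈ Icc (0:ℝ) S, u' s = v s := by
    intro u' u'' hu' hu'' hode h0
    have hu'c : ContinuousOn u' (Icc 0 S) := fun x hx => (hu'' x hx).continuousWithinAt
    have key : ∀ y ∈ Icc (0:ℝ) S, Real.exp (k * y) * u' y = F y := by
      apply eq_of_has_deriv_right_eq (f' := fun x => Real.exp (k * x) * f x)
      · intro x hx
        have hxI : x ∈ Icc (0:ℝ) S := ⟨hx.1, hx.2.le⟩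
        have hd : HasDerivWithinAt u' (u'' x) (Ici x) x :=
          (hu'' x hxI).mono_of_mem_nhdsWithin (hmem x hx)
        have he : HasDerivAt (fun y : ℝ => Real.exp (k * y)) (k * Real.exp (k * x)) x := by
          simpa [mul_comm] using ((hasDerivAt_id x).const_mul k).exp
        have h := (he.hasDerivWithinAt (s := Ici x)).fun_mul hd
        refine h.congr_deriv ?_; symm
        rw [hf_eq x hxI]
        linear_combination (-(Real.exp (k * x))) * hode x hxI
      · intro x hx
        exact (hFd x).hasDerivWithinAt
      · exact ((Real.continuous_exp.comp (continuous_const.mul continuous_id)).continuousOn).mul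
          hu'c
      · exact hFc.continuousOn
      · simp [h0, hF0]
    intro s hs
    have hE : Real.exp (-(k * s)) * Real.exp (k * s) = 1 := by
      rw [← Real.exp_add]; simp
    calc u' s = Real.exp (-(k * s)) * (Real.exp (k * s) * u' s) := by
          rw [← mul_assoc, hE, one_mul]
      _ = v s := by rw [key s hs]
  constructor
  · constructor
    · -- forward direction
      rintro ⟨u', u'', hu', hu'', _, hode, hu0, h0⟩
      have hA := lemA u' u'' hu' hu'' hode h0
      have hueqG : ∀ y ∈ Icc (0:ℝ) S, u y = G y := by
        apply eq_of_has_deriv_right_eq (f' := fun x => v x)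
        · intro x hx
          have hxI : x ∈ Icc (0:ℝ) S := ⟨hx.1, hx.2.le⟩
          have hd : HasDerivWithinAt u (u' x) (Ici x) x :=
            (hu' x hxI).mono_of_mem_nhdsWithin (hmem x hx)
          rwa [hA x hxI] at hd
        · intro x hx
          exact (hGd x).hasDerivWithinAt
        · exact huc
        · exact hGc.continuousOn
        · rw [hu0, hG0]
      intro s hs
      rw [hueqG s hs, ← hGeq s hs]
    · -- backward direction
      intro hint
      have hueqG : ∀ s ∈ Icc (0:ℝ) S, u s = G s := fun s hs =>
        (hint s hs).trans (hGeq s hs)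
      refine ⟨v, fun s => f s - k * v s, ?_, ?_, ?_, ?_, ?_, hv0⟩
      · intro s hs
        exact ((hGd s).hasDerivWithinAt).congr (fun y hy => hueqG y hy) (hueqG s hs)
      · intro s hs
        exact (hvd s).hasDerivWithinAt
      · exact (hfc.sub (continuous_const.mul hvc)).continuousOn
      · intro s hs
        show f s - k * v s + k * v s + Real.sqrt (2 * u s) = 1
        rw [hf_eq s hs]; ring
      · have := hint 0 ⟨le_refl 0, hS.le⟩
        simpa using this
  · -- derivative formula
    rintro u' u'' ⟨hu', hu'', _, hode, _, h0⟩ s hs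
    rw [lemA u' u'' hu' hu'' hode h0 s hs]
    have hFs : F s = ∫ t in (0:ℝ)..s, Real.exp (β * t / c) * (1 - Real.sqrt (2 * u t)) := by
      apply intervalIntegral.integral_congr
      intro t ht
      rw [uIcc_of_le hs.1] at ht
      have htI : t ∈ Icc (0:ℝ) S := ⟨ht.1, ht.2.trans hs.2⟩
      show Real.exp (k * t) * f t = Real.exp (β * t / c) * (1 - Real.sqrt (2 * u t))
      rw [hf_eq t htI]
      have harg : k * t = β * t / c := by rw [hkdef]; ring
      rw [harg]
    rw [hvdef]
    simp only []
    rw [hFs]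
    have harg : -(k * s) = -β * s / c := by rw [hkdef]; ring
    rw [harg]
end

section
/- Let β > 0, ω > 0 and S > 0. For each α ∈ [0, 3/2] let u_α : [0, S] → ℝ denote the unique twice continuously differentiable nonnegative solution of u'' + (β/√ω)·u' + √(2u) = 1 with u(0) = α²/2 and u'(0) = 0. Then the map α ↦ u_α is continuous from [0, 3/2] into C([0, S]) with the supremum norm; that is, if α → α₀ in [0, 3/2] then max_{s∈[0,S]} |u_α(s) − u_{α₀}(s)| → 0. -/
open Set

lemma antitoneOn_aux {a b : ℝ} {f f' : ℝ → ℝ} (hc : ContinuousOn f (Icc a b))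
    (hd : ∀ x ∈ Ioo a b, HasDerivAt f (f' x) x) (h0 : ∀ x ∈ Ioo a b, f' x ≤ 0) :
    AntitoneOn f (Icc a b) := by
  apply antitoneOn_of_deriv_nonpos (convex_Icc a b) hc
  · rw [interior_Icc]
    exact fun x hx => (hd x hx).differentiableAt.differentiableWithinAt
  · rw [interior_Icc]
    intro x hx
    rw [(hd x hx).deriv]
    exact h0 x hx

lemma monotoneOn_aux {a b : ℝ} {f f' : ℝ → ℝ} (hc : ContinuousOn f (Icc a b))
    (hd : ∀ x ∈ Ioo a b, HasDerivAt f (f' x) x) (h0 : ∀ x ∈ Ioo a b, 0 ≤ f' x) :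
    MonotoneOn f (Icc a b) := by
  apply monotoneOn_of_deriv_nonneg (convex_Icc a b) hc
  · rw [interior_Icc]
    exact fun x hx => (hd x hx).differentiableAt.differentiableWithinAt
  · rw [interior_Icc]
    intro x hx
    rw [(hd x hx).deriv]
    exact h0 x hx

lemma hasDerivAt_mul_sqrt (x : ℝ) :
    HasDerivAt (fun y => y * Real.sqrt y) (3 / 2 * Real.sqrt x) x := by
  rcases lt_trichotomy x 0 with hx | rfl | hx
  · have h : (fun y : ℝ => y * Real.sqrt y) =ᶠ[nhds x] fun _ => (0:ℝ) := by
      filter_upwards [eventually_lt_nhds hx] with y hy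
      rw [Real.sqrt_eq_zero'.mpr hy.le, mul_zero]
    have h0 : Real.sqrt x = 0 := Real.sqrt_eq_zero'.mpr hx.le
    rw [h0]
    simpa using (hasDerivAt_const x (0:ℝ)).congr_of_eventuallyEq h
  · rw [hasDerivAt_iff_tendsto_slope]
    have heq : slope (fun y : ℝ => y * Real.sqrt y) 0 =ᶠ[nhdsWithin 0 {(0:ℝ)}ᶜ] Real.sqrt := by
      filter_upwards [self_mem_nhdsWithin] with y hy
      have hy' : y ≠ 0 := hy
      simp only [slope, sub_zero, mul_zero, Real.sqrt_zero]
      rw [vsub_eq_sub, sub_zero, smul_eq_mul, ← mul_assoc,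
        inv_mul_cancel₀ hy', one_mul]
    rw [Filter.tendsto_congr' heq]
    have : Filter.Tendsto Real.sqrt (nhdsWithin 0 {(0:ℝ)}ᶜ) (nhds (Real.sqrt 0)) :=
      (Real.continuous_sqrt.tendsto 0).mono_left nhdsWithin_le_nhds
    simpa using this
  · have h1 := Real.hasDerivAt_sqrt (ne_of_gt hx)
    have h2 := (hasDerivAt_id x).mul h1
    have hs : Real.sqrt x ≠ 0 := by positivity
    have hxeq : (1:ℝ) * Real.sqrt x + id x * (1/(2*Real.sqrt x)) = 3/2*Real.sqrt x := by
      have h := Real.mul_self_sqrt hx.le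
      field_simp
      simp only [id]
      nlinarith [h]
    rw [← hxeq]
    exact h2

noncomputable def Phi (x : ℝ) : ℝ := 2 * x * Real.sqrt (2 * x) / 3 - x

lemma hasDerivAt_Phi (x : ℝ) : HasDerivAt Phi (Real.sqrt (2 * x) - 1) x := by
  have h1 : HasDerivAt (fun y : ℝ => 2 * y) 2 x := by
    simpa using (hasDerivAt_id x).const_mul (2:ℝ)
  have h2 := (hasDerivAt_mul_sqrt (2 * x)).comp x h1
  have h3 := (h2.div_const 3).sub (hasDerivAt_id x)
  have : 3 / 2 * Real.sqrt (2 * x) * 2 / 3 - 1 = Real.sqrt (2 * x) - 1 := by ring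
  rw [this] at h3
  apply h3.congr_of_eventuallyEq
  filter_upwards with y
  simp only [Phi, Function.comp, id]
  rfl

lemma continuous_Phi : Continuous Phi := by
  unfold Phi
  fun_prop

lemma Phi_ge (x : ℝ) (hx : 0 ≤ x) : -x ≤ Phi x := by
  have := Real.sqrt_nonneg (2 * x)
  unfold Phi
  nlinarith

noncomputable def z0 (k : ℝ) : ℝ := min (1/32) (1/(32*k^2))
noncomputable def m0 (k S : ℝ) : ℝ := min (z0 k/4) (k * (z0 k)^2/(4*S))

lemma z0_pos {k : ℝ} (hk : 0 < k) : 0 < z0 k := by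
  unfold z0; positivity

lemma m0_pos {k S : ℝ} (hk : 0 < k) (hS : 0 < S) : 0 < m0 k S := by
  have := z0_pos hk
  unfold m0; positivity

set_option maxHeartbeats 1000000 in
lemma solution_bounds (k S α : ℝ) (hk : 0 < k) (hS : 0 < S)
    (u u' u'' : ℝ → ℝ)
    (hu : ∀ s ∈ Icc (0:ℝ) S, HasDerivWithinAt u (u' s) (Icc 0 S) s)
    (hu' : ∀ s ∈ Icc (0:ℝ) S, HasDerivWithinAt u' (u'' s) (Icc 0 S) s)
    (hpos : ∀ s ∈ Icc (0:ℝ) S, 0 ≤ u s)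
    (heq : ∀ s ∈ Icc (0:ℝ) S, u'' s + k * u' s + Real.sqrt (2 * u s) = 1)
    (hα0 : 0 ≤ α) (hα2 : α ≤ 3/2) (hu0 : u 0 = α^2/2) (hu'0 : u' 0 = 0) :
    ∀ t ∈ Icc (0:ℝ) S, (u' t)^2 ≤ 2 * u t ∧ u t ≤ 9/8 ∧
      (m0 k S ≤ u t ∨ (α^2/2 + t^2/4 ≤ u t ∧ t/2 ≤ u' t)) := by
  have hmem0 : (0:ℝ) ∈ Icc (0:ℝ) S := ⟨le_refl 0, hS.le⟩
  have hu_at : ∀ t ∈ Ioo (0:ℝ) S, HasDerivAt u (u' t) t := fun t ht =>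
    (hu t (Ioo_subset_Icc_self ht)).hasDerivAt (Icc_mem_nhds ht.1 ht.2)
  have hu'_at : ∀ t ∈ Ioo (0:ℝ) S, HasDerivAt u' (u'' t) t := fun t ht =>
    (hu' t (Ioo_subset_Icc_self ht)).hasDerivAt (Icc_mem_nhds ht.1 ht.2)
  have hucont : ContinuousOn u (Icc (0:ℝ) S) := fun s hs => (hu s hs).continuousWithinAt
  have hu'cont : ContinuousOn u' (Icc (0:ℝ) S) := fun s hs => (hu' s hs).continuousWithinAt
  set E1 : ℝ → ℝ := fun s => (u' s)^2/2 + Phi (u s) with hE1def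
  have hE1cont : ContinuousOn E1 (Icc (0:ℝ) S) :=
    (((hu'cont.pow 2).div_const 2).add (continuous_Phi.comp_continuousOn hucont))
  have hE1deriv : ∀ t ∈ Ioo (0:ℝ) S, HasDerivAt E1 (-(k * (u' t)^2)) t := by
    intro t ht
    have h1 := (((hu'_at t ht).pow 2).div_const 2).add
      ((hasDerivAt_Phi (u t)).comp t (hu_at t ht))
    have h4 := heq t (Ioo_subset_Icc_self ht)
    have hval : (↑(2:ℕ) * u' t ^ (2-1) * u'' t)/2 + (Real.sqrt (2 * u t) - 1) * u' t
        = -(k * (u' t)^2) := by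
      push_cast
      linear_combination (u' t) * h4
    rw [hval] at h1
    exact h1
  have hE1anti : AntitoneOn E1 (Icc (0:ℝ) S) :=
    antitoneOn_aux hE1cont hE1deriv (fun t ht => by nlinarith [sq_nonneg (u' t)])
  have hE10 : E1 0 ≤ 0 := by
    have hsq : Real.sqrt (2 * (α^2/2)) = α := by
      rw [show 2 * (α^2/2) = α^2 by ring, Real.sqrt_sq hα0]
    simp only [hE1def, hu0, hu'0, Phi, hsq]
    nlinarith
  have hE1le : ∀ t ∈ Icc (0:ℝ) S, E1 t ≤ 0 := fun t ht =>
    (hE1anti hmem0 ht ht.1).trans hE10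
  have key1 : ∀ t ∈ Icc (0:ℝ) S, (u' t)^2 ≤ 2 * u t := by
    intro t ht
    have h1 := hE1le t ht
    have h2 := Real.sqrt_nonneg (2 * u t)
    have h3 := hpos t ht
    simp only [hE1def, Phi] at h1
    nlinarith
  have key2 : ∀ t ∈ Icc (0:ℝ) S, u t ≤ 9/8 := by
    intro t ht
    by_contra hcon
    push_neg at hcon
    have h1 := hE1le t ht
    have hsq : (3:ℝ)/2 < Real.sqrt (2 * u t) := by
      rw [show (3:ℝ)/2 = Real.sqrt ((3/2)^2) by rw [Real.sqrt_sq]; norm_num]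
      apply Real.sqrt_lt_sqrt (by norm_num)
      nlinarith
    simp only [hE1def, Phi] at h1
    nlinarith [sq_nonneg (u' t), hpos t ht]
  intro t ht
  refine ⟨key1 t ht, key2 t ht, ?_⟩
  by_cases hm : m0 k S ≤ u t
  · exact Or.inl hm
  push_neg at hm
  right
  -- constants
  have hz0 := z0_pos hk
  have hm0 := m0_pos hk hS
  have hm0a : m0 k S ≤ z0 k / 4 := min_le_left _ _
  have hm0b : m0 k S ≤ k * (z0 k)^2/(4*S) := min_le_right _ _
  have hz0a : z0 k ≤ 1/32 := min_le_left _ _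
  have hz0b : z0 k ≤ 1/(32*k^2) := min_le_right _ _
  set η : ℝ := z0 k / (2*S) with hηdef
  have hη : 0 < η := by positivity
  -- Step A : u ≤ z0 on [0,t]
  have hIccsub : Icc (0:ℝ) t ⊆ Icc (0:ℝ) S := Icc_subset_Icc_right ht.2
  have hIoosub : Ioo (0:ℝ) t ⊆ Ioo (0:ℝ) S := Ioo_subset_Ioo_right ht.2
  have hA : ∀ s ∈ Icc (0:ℝ) t, u s ≤ z0 k := by
    intro s hs
    have hsS : s ∈ Icc (0:ℝ) S := hIccsub hs
    set φ : ℝ → ℝ := fun s => 2*η*k*(u s) - E1 s + η^2*k*s with hφdef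
    have hφcont : ContinuousOn φ (Icc (0:ℝ) S) := by
      apply ContinuousOn.add
      · exact (hucont.const_smul (2*η*k)).sub hE1cont
      · exact (continuous_const.mul continuous_id).continuousOn
    have hφmono : MonotoneOn φ (Icc (0:ℝ) S) := by
      apply monotoneOn_aux hφcont
        (fun x hx => (((hu_at x hx).const_mul (2*η*k)).sub (hE1deriv x hx)).add
          (by simpa using (hasDerivAt_id x).const_mul (η^2*k)))
      intro x hx
      nlinarith [mul_nonneg hk.le (sq_nonneg (u' x + η))]
    have h1 : φ s ≤ φ t := hφmono hsS ht hs.2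
    have h2 : E1 s ≤ 0 := hE1le s hsS
    have h3 : -(u t) ≤ E1 t := by
      have := Phi_ge (u t) (hpos t ht)
      simp only [hE1def]
      nlinarith [sq_nonneg (u' t)]
    -- unfold
    simp only [hφdef] at h1
    have hs0 : 0 ≤ s := hs.1
    have htS : t ≤ S := ht.2
    have ht0 : 0 ≤ t := ht.1
    -- from h1 : 2ηk u s - E1 s + η²k s ≤ 2ηk u t - E1 t + η²k t
    -- u s ≤ u t + (E1 s - E1 t)/(2ηk) + η(t-s)/2 ≤ m0 + m0/(2ηk) + ηS/2
    have hum : u t ≤ m0 k S := hm.le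
    -- 2ηk = z0 k * k / S
    have hηk : 2*η*k = z0 k * k / S := by rw [hηdef]; field_simp
    -- conclude via nlinarith: goal u s ≤ z0 k
    -- 2ηk*(u s) ≤ 2ηk*(u t) + (E1 s - E1 t) + η²k*(t-s) ≤ 2ηk*m0 + m0 + η²k*S
    -- and 2ηk*z0 = z0²k/S ; m0 ≤ z0/4 ; m0 ≤ kz0²/(4S) ; 2ηk*m0 ≤ 2ηk*z0/4 ; η²kS = z0²k/(4S)
    have hb1 : 2*η*k*(u s) ≤ 2*η*k*(u t) + (E1 s - E1 t) + η^2*k*(t-s) := by linarith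
    have hb2 : 2*η*k*(u s) ≤ 2*η*k*(m0 k S) + m0 k S + η^2*k*S := by
      have h2ηk : 0 < 2*η*k := by positivity
      have hE1ts : E1 s - E1 t ≤ m0 k S := by linarith
      have hts : t - s ≤ S := by linarith
      have hη2 : η^2*k*(t-s) ≤ η^2*k*S :=
        mul_le_mul_of_nonneg_left hts (by positivity)
      have hmul : 2*η*k*(u t) ≤ 2*η*k*(m0 k S) :=
        mul_le_mul_of_nonneg_left hum (by positivity)
      linarith
    have hS' : S ≠ 0 := ne_of_gt hS
    have hb3 := mul_le_mul_of_nonneg_left hb2 hS.le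
    have r1 : S * (2*η*k*(u s)) = z0 k * k * (u s) := by
      rw [hηdef]; field_simp
    have r2 : S * (2*η*k*(m0 k S) + m0 k S + η^2*k*S)
        = z0 k * k * (m0 k S) + S * m0 k S + k * (z0 k)^2/4 := by
      rw [hηdef]; field_simp; ring
    rw [r1, r2] at hb3
    have r3 : z0 k * k * (m0 k S) ≤ k * (z0 k)^2/4 := by
      have h := mul_le_mul_of_nonneg_left hm0a (by positivity : (0:ℝ) ≤ z0 k * k)
      have e : z0 k * k * (z0 k/4) = k * (z0 k)^2/4 := by ring
      linarith
    have r4 : S * m0 k S ≤ k * (z0 k)^2/4 := by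
      have := mul_le_mul_of_nonneg_left hm0b hS.le
      calc S * m0 k S ≤ S * (k * (z0 k)^2/(4*S)) := this
        _ = k * (z0 k)^2/4 := by field_simp
    have e5 : z0 k * k * (z0 k) = k * (z0 k)^2 := by ring
    have hkz : 0 ≤ k * (z0 k)^2 := by positivity
    have r5 : z0 k * k * (u s) ≤ z0 k * k * (z0 k) := by linarith
    have hpos' : 0 < z0 k * k := by positivity
    exact le_of_mul_le_mul_left r5 hpos'
  -- Step B : u'' ≥ 1/2 on [0,t]
  have hk2 : k^2*(z0 k) ≤ 1/32 := by
    have h := mul_le_mul_of_nonneg_left hz0b (sq_nonneg k)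
    have e : k^2 * (1/(32*k^2)) = 1/32 := by
      field_simp
    linarith
  have hB : ∀ s ∈ Icc (0:ℝ) t, 1/2 ≤ u'' s := by
    intro s hs
    have hsS : s ∈ Icc (0:ℝ) S := hIccsub hs
    have h1 : (u' s)^2 ≤ 2*u s := key1 s hsS
    have h2 : u s ≤ z0 k := hA s hs
    have hsqrt : Real.sqrt (2*u s) ≤ 1/4 := by
      apply Real.sqrt_le_iff.mpr
      constructor
      · norm_num
      · nlinarith
    have hku : k * u' s ≤ 1/4 := by
      have m1 := mul_le_mul_of_nonneg_left h1 (sq_nonneg k)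
      have m2 := mul_le_mul_of_nonneg_left h2 (sq_nonneg k)
      nlinarith [sq_nonneg (k*u' s - 1/4)]
    have heqs := heq s hsS
    linarith
  -- Step C : u' s ≥ s/2 on [0,t]
  have ht0 : (0:ℝ) ≤ t := ht.1
  have hmem0t : (0:ℝ) ∈ Icc (0:ℝ) t := ⟨le_refl 0, ht0⟩
  have hC : ∀ s ∈ Icc (0:ℝ) t, s/2 ≤ u' s := by
    intro s hs
    have hmono : MonotoneOn (fun s => u' s - s/2) (Icc (0:ℝ) t) := by
      apply monotoneOn_aux
        ((hu'cont.mono hIccsub).sub (continuous_id.div_const 2).continuousOn)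
        (fun x hx => (hu'_at x (hIoosub hx)).sub ((hasDerivAt_id x).div_const 2))
      intro x hx
      have := hB x (Ioo_subset_Icc_self hx)
      linarith
    have := hmono hmem0t hs hs.1
    simp only [hu'0] at this
    simpa using this
  -- Step D : u s ≥ α²/2 + s²/4 on [0,t]
  have hD : α^2/2 + t^2/4 ≤ u t := by
    have hmono : MonotoneOn (fun s => u s - s^2/4) (Icc (0:ℝ) t) := by
      apply monotoneOn_aux
        ((hucont.mono hIccsub).sub ((continuous_pow 2).div_const 4).continuousOn)
        (fun x hx => (hu_at x (hIoosub hx)).sub ((hasDerivAt_pow 2 x).div_const 4))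
      intro x hx
      have := hC x (Ioo_subset_Icc_self hx)
      have hx0 : (0:ℝ) ≤ x := (Ioo_subset_Icc_self hx).1
      push_cast
      ring_nf
      linarith
    have := hmono hmem0t ⟨ht0, le_refl t⟩ ht0
    simp only [hu0] at this
    linarith
  exact ⟨hD, hC t ⟨ht0, le_refl t⟩⟩


lemma lem_ulb (rb m t u u' : ℝ) (hrb : 0 < rb) (hu0 : 0 ≤ u) (hrm : rb * m = 3)
    (h9 : u ≤ 9/8) (hsq : u'^2 ≤ 2*u)
    (hd : m ≤ u ∨ (0 ≤ t ∧ t/2 ≤ u')) : -(rb*(2*u)) ≤ u' := by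
  rcases hd with h | ⟨ht, h⟩
  · have h1 : -(3/2) ≤ u' := by nlinarith
    have h2 : 6 ≤ rb*(2*u) := by nlinarith [mul_le_mul_of_nonneg_left h hrb.le]
    linarith
  · nlinarith [mul_nonneg hrb.le hu0]

lemma lem_divlb (rb u u' a : ℝ) (ha : 0 < a) (ha2 : a^2 = 2*u)
    (h : -(rb*(2*u)) ≤ u') : -(rb*a) ≤ 1/(2*a)*(2*u') := by
  rw [show 1/(2*a)*(2*u') = u'/a by field_simp, le_div_iff₀ ha]
  have e : -(rb*a)*a = -(rb*(2*u)) := by linear_combination (-rb)*ha2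
  linarith

lemma lem_vbound (k rb W W' Sg σd : ℝ) (hk : 0 < k) (hrb : 0 < rb) (hSg : 0 < Sg)
    (hσd : -(rb*Sg) ≤ σd) :
    -(k*W'^2) - W^2*σd/Sg^2 ≤ rb*(W'^2/2 + W^2/Sg) := by
  have h1 : -(W^2*σd)/Sg^2 ≤ rb*W^2/Sg := by
    rw [div_le_div_iff₀ (by positivity) hSg]
    nlinarith [mul_le_mul_of_nonneg_left hσd (mul_nonneg (sq_nonneg W) hSg.le)]
  have h2 : 0 ≤ k*W'^2 := by positivity
  have h3 : 0 ≤ rb*(W'^2/2) := by positivity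
  have h4 : -(W^2*σd)/Sg^2 = -(W^2*σd/Sg^2) := by ring
  have h5 : rb*(W'^2/2 + W^2/Sg) = rb*(W'^2/2) + rb*W^2/Sg := by ring
  linarith

lemma lem_Fderiv (V Ex e rb : ℝ) (he : 0 < e) (h : V ≤ rb*Ex) :
    V*e + Ex*(e*(-rb)) ≤ 0 := by nlinarith

lemma lem_E0 (α α₀ : ℝ) (hsum : 0 < α+α₀) (h3 : α ≤ 3/2) (h03 : α₀ ≤ 3/2) :
    (α^2/2 - α₀^2/2)^2/(α+α₀) ≤ (α-α₀)^2 := by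
  have he : (α^2/2 - α₀^2/2)^2/(α+α₀) = (α-α₀)^2*(α+α₀)/4 := by
    field_simp
    ring
  rw [he]
  nlinarith [sq_nonneg (α-α₀)]

lemma lem_sqrt32 (u : ℝ) (h : u ≤ 9/8) : Real.sqrt (2*u) ≤ 3/2 :=
  Real.sqrt_le_iff.mpr ⟨by norm_num, by nlinarith⟩

lemma lem_sq_lt (x y : ℝ) (hy : 0 < y) (h : x^2 < y^2) : |x| < y := by
  by_contra hc
  push_neg at hc
  nlinarith [sq_abs x, abs_nonneg x]

lemma lem_sq_lt2 (x d : ℝ) (h : |x| < d) : x^2 < d^2 := by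
  rw [← sq_abs]
  exact pow_lt_pow_left₀ h (abs_nonneg x) (by norm_num)


set_option maxHeartbeats 2000000

/-- Continuous dependence on the initial datum: if for each `α ∈ [0, 3/2]`,
`U α` is the (unique) nonnegative C² solution of the transformed Washburn
problem with `U α 0 = α²/2`, `(U α)' 0 = 0`, then `α ↦ U α` is continuous into
`C([0, S])` with the supremum norm. -/
theorem stmt_10
    (β ω S : ℝ) (hβ : 0 < β) (hω : 0 < ω) (hS : 0 < S)
    (U U' U'' : ℝ → ℝ → ℝ)
    (hsol : ∀ α ∈ Icc (0:ℝ) (3/2),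
      (∀ s ∈ Icc (0:ℝ) S, HasDerivWithinAt (U α) (U' α s) (Icc 0 S) s) ∧
      (∀ s ∈ Icc (0:ℝ) S, HasDerivWithinAt (U' α) (U'' α s) (Icc 0 S) s) ∧
      ContinuousOn (U'' α) (Icc 0 S) ∧
      (∀ s ∈ Icc (0:ℝ) S, 0 ≤ U α s) ∧
      (∀ s ∈ Icc (0:ℝ) S,
        U'' α s + (β / Real.sqrt ω) * U' α s + Real.sqrt (2 * U α s) = 1) ∧
      U α 0 = α^2 / 2 ∧ U' α 0 = 0) :
    ∀ α₀ ∈ Icc (0:ℝ) (3/2), ∀ ε > (0:ℝ), ∃ δ > (0:ℝ),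
      ∀ α ∈ Icc (0:ℝ) (3/2), |α - α₀| < δ →
        ∀ s ∈ Icc (0:ℝ) S, |U α s - U α₀ s| < ε := by
  intro α₀ hα₀ ε hε
  set k : ℝ := β / Real.sqrt ω with hkdef
  have hk : 0 < k := div_pos hβ (Real.sqrt_pos.mpr hω)
  have hm0 := m0_pos hk hS
  set rb : ℝ := 3 / m0 k S with hrbdef
  have hrb : 0 < rb := by positivity
  have hrm : rb * m0 k S = 3 := by rw [hrbdef]; field_simp
  set C : ℝ := 2 * Real.exp (rb*S/2) with hCdef
  have hCpos : 0 < C := by positivity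
  refine ⟨ε/C, by positivity, ?_⟩
  intro α hα hαδ s hs
  by_cases haa : α = α₀
  · subst haa
    simpa using hε
  obtain ⟨hu, hu', _, hupos, hueq, hu0, hu'0⟩ := hsol α hα
  obtain ⟨hv, hv', _, hvpos, hveq, hv0, hv'0⟩ := hsol α₀ hα₀
  have hFu := solution_bounds k S α hk hS (U α) (U' α) (U'' α) hu hu' hupos hueq
    hα.1 hα.2 hu0 hu'0
  have hFv := solution_bounds k S α₀ hk hS (U α₀) (U' α₀) (U'' α₀) hv hv' hvpos hveq
    hα₀.1 hα₀.2 hv0 hv'0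
  have hsum : 0 < α + α₀ := by
    rcases lt_or_eq_of_le hα.1 with h | h
    · linarith [hα₀.1]
    rcases lt_or_eq_of_le hα₀.1 with h' | h'
    · linarith
    exact absurd (h.symm.trans h') haa
  have hmem0 : (0:ℝ) ∈ Icc (0:ℝ) S := ⟨le_refl 0, hS.le⟩
  have hucont : ContinuousOn (U α) (Icc (0:ℝ) S) := fun x hx => (hu x hx).continuousWithinAt
  have hvcont : ContinuousOn (U α₀) (Icc (0:ℝ) S) := fun x hx => (hv x hx).continuousWithinAt
  have hu'cont : ContinuousOn (U' α) (Icc (0:ℝ) S) := fun x hx => (hu' x hx).continuousWithinAt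
  have hv'cont : ContinuousOn (U' α₀) (Icc (0:ℝ) S) := fun x hx => (hv' x hx).continuousWithinAt
  have hu_at : ∀ t ∈ Ioo (0:ℝ) S, HasDerivAt (U α) (U' α t) t := fun t ht =>
    (hu t (Ioo_subset_Icc_self ht)).hasDerivAt (Icc_mem_nhds ht.1 ht.2)
  have hv_at : ∀ t ∈ Ioo (0:ℝ) S, HasDerivAt (U α₀) (U' α₀ t) t := fun t ht =>
    (hv t (Ioo_subset_Icc_self ht)).hasDerivAt (Icc_mem_nhds ht.1 ht.2)
  have hu'_at : ∀ t ∈ Ioo (0:ℝ) S, HasDerivAt (U' α) (U'' α t) t := fun t ht =>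
    (hu' t (Ioo_subset_Icc_self ht)).hasDerivAt (Icc_mem_nhds ht.1 ht.2)
  have hv'_at : ∀ t ∈ Ioo (0:ℝ) S, HasDerivAt (U' α₀) (U'' α₀ t) t := fun t ht =>
    (hv' t (Ioo_subset_Icc_self ht)).hasDerivAt (Icc_mem_nhds ht.1 ht.2)
  set σ : ℝ → ℝ := fun t => Real.sqrt (2 * U α t) + Real.sqrt (2 * U α₀ t) with hσdef
  have hupos' : ∀ t ∈ Icc (0:ℝ) S, 0 < t → 0 < U α t := by
    intro t ht ht0
    rcases (hFu t ht).2.2 with h | h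
    · linarith
    · have h1 : 0 < t^2/4 := by positivity
      have h2 : 0 ≤ α^2/2 := by positivity
      linarith [h.1]
  have hvpos' : ∀ t ∈ Icc (0:ℝ) S, 0 < t → 0 < U α₀ t := by
    intro t ht ht0
    rcases (hFv t ht).2.2 with h | h
    · linarith
    · have h1 : 0 < t^2/4 := by positivity
      have h2 : 0 ≤ α₀^2/2 := by positivity
      linarith [h.1]
  have hσ0 : σ 0 = α + α₀ := by
    simp only [hσdef, hu0, hv0]
    rw [show 2 * (α^2/2) = α^2 by ring, show 2 * (α₀^2/2) = α₀^2 by ring,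
      Real.sqrt_sq hα.1, Real.sqrt_sq hα₀.1]
  have hσpos : ∀ t ∈ Icc (0:ℝ) S, 0 < σ t := by
    intro t ht
    rcases eq_or_lt_of_le ht.1 with h0 | h0
    · rw [← h0, hσ0]; exact hsum
    · have h1 := hupos' t ht h0
      have h2 : 0 < Real.sqrt (2 * U α t) := Real.sqrt_pos.mpr (by linarith)
      have h3 := Real.sqrt_nonneg (2 * U α₀ t)
      simp only [hσdef]
      linarith
  have hσcont : ContinuousOn σ (Icc (0:ℝ) S) := by
    apply ContinuousOn.add
    · exact Real.continuous_sqrt.comp_continuousOn (continuousOn_const.mul hucont)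
    · exact Real.continuous_sqrt.comp_continuousOn (continuousOn_const.mul hvcont)
  set E : ℝ → ℝ := fun t => (U' α t - U' α₀ t)^2/2 + (U α t - U α₀ t)^2/σ t with hEdef
  have hEcont : ContinuousOn E (Icc (0:ℝ) S) := by
    apply ContinuousOn.add
    · exact ((hu'cont.sub hv'cont).pow 2).div_const 2
    · exact ((hucont.sub hvcont).pow 2).div hσcont (fun t ht => (hσpos t ht).ne')
  have hEnonneg : ∀ t ∈ Icc (0:ℝ) S, 0 ≤ E t := by
    intro t ht
    have h1 : 0 ≤ (U' α t - U' α₀ t)^2/2 := by positivity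
    have h2 : 0 ≤ (U α t - U α₀ t)^2/σ t := div_nonneg (sq_nonneg _) (hσpos t ht).le
    simp only [hEdef]
    linarith
  have hEderiv : ∀ t ∈ Ioo (0:ℝ) S, ∃ V, HasDerivAt E V t ∧ V ≤ rb * E t := by
    intro t ht
    have htI : t ∈ Icc (0:ℝ) S := Ioo_subset_Icc_self ht
    have hut : 0 < U α t := hupos' t htI ht.1
    have hvt : 0 < U α₀ t := hvpos' t htI ht.1
    have hapos : 0 < Real.sqrt (2 * U α t) := Real.sqrt_pos.mpr (by linarith)
    have hbpos : 0 < Real.sqrt (2 * U α₀ t) := Real.sqrt_pos.mpr (by linarith)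
    have hσt : 0 < σ t := hσpos t htI
    have ha_at : HasDerivAt (fun x => Real.sqrt (2 * U α x))
        (1/(2*Real.sqrt (2 * U α t)) * (2 * U' α t)) t :=
      (Real.hasDerivAt_sqrt (by linarith)).comp t ((hu_at t ht).const_mul 2)
    have hb_at : HasDerivAt (fun x => Real.sqrt (2 * U α₀ x))
        (1/(2*Real.sqrt (2 * U α₀ t)) * (2 * U' α₀ t)) t :=
      (Real.hasDerivAt_sqrt (by linarith)).comp t ((hv_at t ht).const_mul 2)
    have hσ_at : HasDerivAt σ (1/(2*Real.sqrt (2 * U α t)) * (2 * U' α t)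
        + 1/(2*Real.sqrt (2 * U α₀ t)) * (2 * U' α₀ t)) t := ha_at.add hb_at
    have hw_at : HasDerivAt (fun x => U α x - U α₀ x) (U' α t - U' α₀ t) t :=
      (hu_at t ht).sub (hv_at t ht)
    have hw'_at : HasDerivAt (fun x => U' α x - U' α₀ x) (U'' α t - U'' α₀ t) t :=
      (hu'_at t ht).sub (hv'_at t ht)
    have hE_at := ((hw'_at.pow 2).div_const 2).add
      ((hw_at.pow 2).div hσ_at (hσt.ne'))
    refine ⟨_, hE_at, ?_⟩
    have ha2 : (Real.sqrt (2 * U α t))^2 = 2 * U α t := Real.sq_sqrt (by linarith)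
    have hb2 : (Real.sqrt (2 * U α₀ t))^2 = 2 * U α₀ t := Real.sq_sqrt (by linarith)
    have hσteq : σ t = Real.sqrt (2 * U α t) + Real.sqrt (2 * U α₀ t) := rfl
    have hab : Real.sqrt (2 * U α t) - Real.sqrt (2 * U α₀ t)
        = 2*(U α t - U α₀ t)/σ t := by
      rw [eq_div_iff hσt.ne', hσteq]
      linear_combination ha2 - hb2
    have hw'' : U'' α t - U'' α₀ t = -(k*(U' α t - U' α₀ t))
        - (Real.sqrt (2 * U α t) - Real.sqrt (2 * U α₀ t)) := by
      linarith [hueq t htI, hveq t htI]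
    have hua := lem_ulb rb (m0 k S) t (U α t) (U' α t) hrb hut.le hrm
      (hFu t htI).2.1 (hFu t htI).1
      (by rcases (hFu t htI).2.2 with h | h
          · exact Or.inl h
          · exact Or.inr ⟨htI.1, h.2⟩)
    have hva := lem_ulb rb (m0 k S) t (U α₀ t) (U' α₀ t) hrb hvt.le hrm
      (hFv t htI).2.1 (hFv t htI).1
      (by rcases (hFv t htI).2.2 with h | h
          · exact Or.inl h
          · exact Or.inr ⟨htI.1, h.2⟩)
    have t1 := lem_divlb rb (U α t) (U' α t) (Real.sqrt (2 * U α t)) hapos ha2 hua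
    have t2 := lem_divlb rb (U α₀ t) (U' α₀ t) (Real.sqrt (2 * U α₀ t)) hbpos hb2 hva
    have hσd : -(rb * σ t) ≤ 1/(2*Real.sqrt (2 * U α t)) * (2 * U' α t)
        + 1/(2*Real.sqrt (2 * U α₀ t)) * (2 * U' α₀ t) := by
      rw [hσteq]
      have : -(rb * (Real.sqrt (2 * U α t) + Real.sqrt (2 * U α₀ t)))
          = -(rb * Real.sqrt (2 * U α t)) + -(rb * Real.sqrt (2 * U α₀ t)) := by ring
      rw [this]
      exact add_le_add t1 t2
    have hVeq : (↑(2:ℕ)*(U' α t - U' α₀ t)^(2-1)*(U'' α t - U'' α₀ t))/2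
        + ((↑(2:ℕ)*(U α t - U α₀ t)^(2-1)*(U' α t - U' α₀ t))*σ t
          - (U α t - U α₀ t)^2*(1/(2*Real.sqrt (2 * U α t)) * (2 * U' α t)
            + 1/(2*Real.sqrt (2 * U α₀ t)) * (2 * U' α₀ t)))/(σ t)^2
        = -(k*(U' α t - U' α₀ t)^2) - (U α t - U α₀ t)^2
            *(1/(2*Real.sqrt (2 * U α t)) * (2 * U' α t)
              + 1/(2*Real.sqrt (2 * U α₀ t)) * (2 * U' α₀ t))/(σ t)^2 := by
      push_cast
      rw [hw'', hab]
      have hσne := hσt.ne'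
      field_simp
      ring
    refine hVeq.trans_le ?_
    have := lem_vbound k rb (U α t - U α₀ t) (U' α t - U' α₀ t) (σ t)
      (1/(2*Real.sqrt (2 * U α t)) * (2 * U' α t)
        + 1/(2*Real.sqrt (2 * U α₀ t)) * (2 * U' α₀ t)) hk hrb hσt hσd
    simpa only [hEdef] using this
  -- Gronwall via monotonicity of E t * exp(-rb t)
  have hexp_at : ∀ x : ℝ, HasDerivAt (fun s : ℝ => Real.exp (-(rb*s)))
      (Real.exp (-(rb*x)) * -rb) x := by
    intro x
    have h1 : HasDerivAt (fun s : ℝ => -(rb*s)) (-rb) x := by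
      simpa using ((hasDerivAt_id x).const_mul rb).fun_neg
    exact h1.exp
  have hFanti : AntitoneOn (fun t => E t * Real.exp (-(rb*t))) (Icc (0:ℝ) S) := by
    apply antitoneOn_of_deriv_nonpos (convex_Icc 0 S)
    · exact hEcont.mul (Real.continuous_exp.comp (by continuity)).continuousOn
    · rw [interior_Icc]
      intro x hx
      obtain ⟨V, hV, _⟩ := hEderiv x hx
      exact (hV.mul (hexp_at x)).differentiableAt.differentiableWithinAt
    · rw [interior_Icc]
      intro x hx
      obtain ⟨V, hV, hVle⟩ := hEderiv x hx
      rw [(hV.fun_mul (hexp_at x)).deriv]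
      exact lem_Fderiv V (E x) (Real.exp (-(rb*x))) rb (Real.exp_pos _) hVle
  have hF0 : E s * Real.exp (-(rb*s)) ≤ E 0 := by
    have h := hFanti hmem0 hs hs.1
    simpa using h
  have hE0 : E 0 = (α^2/2 - α₀^2/2)^2/(α+α₀) := by
    simp only [hEdef, hσ0, hu0, hv0, hu'0, hv'0]
    norm_num
  have hE0le : E 0 ≤ (α-α₀)^2 := by
    rw [hE0]
    exact lem_E0 α α₀ hsum hα.2 hα₀.2
  have hE0nonneg : 0 ≤ E 0 := hEnonneg 0 hmem0
  have hEs : E s ≤ Real.exp (rb*S) * (α-α₀)^2 := by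
    have hme : Real.exp (-(rb*s)) * Real.exp (rb*s) = 1 := by
      rw [← Real.exp_add]; simp
    have h2 : E s ≤ E 0 * Real.exp (rb*s) := by
      have h3 := mul_le_mul_of_nonneg_right hF0 (Real.exp_pos (rb*s)).le
      rw [mul_assoc, hme, mul_one] at h3
      exact h3
    have h4 : Real.exp (rb*s) ≤ Real.exp (rb*S) :=
      Real.exp_le_exp.mpr (mul_le_mul_of_nonneg_left hs.2 hrb.le)
    calc E s ≤ E 0 * Real.exp (rb*s) := h2
      _ ≤ (α-α₀)^2 * Real.exp (rb*S) :=
        mul_le_mul hE0le h4 (Real.exp_pos _).le (sq_nonneg _)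
      _ = Real.exp (rb*S) * (α-α₀)^2 := mul_comm _ _
  have hσ3 : σ s ≤ 3 := by
    have h1 := lem_sqrt32 (U α s) (hFu s hs).2.1
    have h2 := lem_sqrt32 (U α₀ s) (hFv s hs).2.1
    simp only [hσdef]
    linarith
  have hws : (U α s - U α₀ s)^2 ≤ σ s * E s := by
    have h0 : (U α s - U α₀ s)^2/σ s ≤ E s := by
      have h1 : 0 ≤ (U' α s - U' α₀ s)^2/2 := by positivity
      simp only [hEdef]
      linarith
    have h2 := mul_le_mul_of_nonneg_left h0 (hσpos s hs).le
    have he : σ s * ((U α s - U α₀ s)^2/σ s) = (U α s - U α₀ s)^2 := by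
      field_simp
      exact mul_div_cancel_left₀ _ (hσpos s hs).ne'
    rw [he] at h2
    exact h2
  have hEsnn : 0 ≤ E s := hEnonneg s hs
  have h5 : (U α s - U α₀ s)^2 ≤ 3 * (Real.exp (rb*S) * (α-α₀)^2) := by
    have h6 : σ s * E s ≤ 3 * E s := mul_le_mul_of_nonneg_right hσ3 hEsnn
    have h7 : 3 * E s ≤ 3 * (Real.exp (rb*S) * (α-α₀)^2) := by linarith
    linarith
  have habs2 : (α-α₀)^2 < (ε/C)^2 := lem_sq_lt2 _ _ hαδ
  have hexp2 : Real.exp (rb*S/2)^2 = Real.exp (rb*S) := by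
    rw [sq, ← Real.exp_add]
    congr 1
    ring
  have hCsq : C^2 = 4*Real.exp (rb*S) := by
    rw [hCdef, mul_pow, hexp2]
    norm_num
  have hfin : 3 * (Real.exp (rb*S) * (ε/C)^2) < ε^2 := by
    have he : 3 * (Real.exp (rb*S) * (ε/C)^2) = 3/4*ε^2 := by
      rw [div_pow, hCsq]
      have hne : Real.exp (rb*S) ≠ 0 := (Real.exp_pos _).ne'
      field_simp
    rw [he]
    nlinarith [hε]
  have hwlt : (U α s - U α₀ s)^2 < ε^2 := by
    have h8 : 3 * (Real.exp (rb*S) * (α-α₀)^2) < 3 * (Real.exp (rb*S) * (ε/C)^2) := by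
      have h9 : 0 < 3 * Real.exp (rb*S) := by positivity
      have := mul_lt_mul_of_pos_left habs2 h9
      calc 3 * (Real.exp (rb*S) * (α-α₀)^2) = 3*Real.exp (rb*S) * (α-α₀)^2 := by ring
        _ < 3*Real.exp (rb*S) * (ε/C)^2 := this
        _ = 3 * (Real.exp (rb*S) * (ε/C)^2) := by ring
    linarith
  exact lem_sq_lt _ _ hε hwlt
end

section
/- Let γ > 0 and set s* := min{1/2, 1/γ}. Then for every s ∈ [0, s*] the following two integral inequalities hold: (1/γ)·∫₀ˢ (1 − e^{−γ(s−t)})·(1 − t) dt ≥ s²/6, and (1/γ)·∫₀ˢ (1 − e^{−γ(s−t)})·(1 − t/√3) dt ≤ s²/2. -/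
open Set

lemma integral_cubic (a b c d s : ℝ) :
    ∫ t in (0:ℝ)..s, (a + b*t + c*t^2 + d*t^3) = a*s + b*s^2/2 + c*s^3/3 + d*s^4/4 := by
  have h : ∀ t ∈ Set.uIcc (0:ℝ) s,
      HasDerivAt (fun t => a*t + b*(t^2/2) + c*(t^3/3) + d*(t^4/4))
        (a + b*t + c*t^2 + d*t^3) t := by
    intro t _
    have h1 : HasDerivAt (fun t : ℝ => t) 1 t := hasDerivAt_id t
    have h2 := hasDerivAt_pow 2 t
    have h3 := hasDerivAt_pow 3 t
    have h4 := hasDerivAt_pow 4 t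
    refine HasDerivAt.congr_deriv ((((h1.const_mul a).add ((h2.div_const 2).const_mul b)).add
      ((h3.div_const 3).const_mul c)).add ((h4.div_const 4).const_mul d)) ?_
    push_cast
    ring
  rw [intervalIntegral.integral_eq_sub_of_hasDerivAt h
    ((Continuous.intervalIntegrable (by fun_prop) _ _))]
  ring

lemma exp_neg_le_quad {u : ℝ} (h0 : 0 ≤ u) (h1 : u ≤ 1) :
    Real.exp (-u) ≤ 1 - u + 3/4 * u^2 := by
  have hb := Real.exp_bound (x := -u) (by rwa [abs_neg, abs_of_nonneg h0]) (n := 2) (by norm_num)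
  have hs : ∑ i ∈ Finset.range 2, (-u)^i / (Nat.factorial i) = 1 - u := by
    norm_num [Finset.sum_range_succ]
    ring
  rw [hs, abs_neg, abs_of_nonneg h0] at hb
  have := abs_le.1 hb
  norm_num at this ⊢
  nlinarith [this.2]

/-- The two integral inequalities showing that the Volterra operator maps the
order interval `[s²/6, s²/2]` into itself on `[0, min{1/2, 1/γ}]`. -/
theorem stmt_11
    (γ : ℝ) (hγ : 0 < γ) :
    ∀ s ∈ Icc (0:ℝ) (min (1/2) (1/γ)),
      (s^2 / 6 ≤ (1/γ) * ∫ t in (0:ℝ)..s, (1 - Real.exp (-γ * (s - t))) * (1 - t)) ∧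
      ((1/γ) * ∫ t in (0:ℝ)..s,
          (1 - Real.exp (-γ * (s - t))) * (1 - t / Real.sqrt 3) ≤ s^2 / 2) := by
  intro s hs
  obtain ⟨hs0, hsm⟩ := hs
  have hs12 : s ≤ 1/2 := le_trans hsm (min_le_left _ _)
  have hsγ : γ * s ≤ 1 := by
    have := le_trans hsm (min_le_right _ _)
    rw [le_div_iff₀ hγ] at this
    linarith
  have hγinv : (0:ℝ) ≤ 1/γ := by positivity
  have key : ∀ t ∈ Icc (0:ℝ) s, 0 ≤ γ * (s - t) ∧ γ * (s - t) ≤ 1 := by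
    intro t ht
    constructor
    · nlinarith [ht.1, ht.2, hγ.le]
    · nlinarith [ht.1, hγ.le]
  constructor
  · -- lower bound
    have hmono : ∫ t in (0:ℝ)..s,
        ((γ*s - 3/4*γ^2*s^2) + (-γ*(1+s) + 3/4*γ^2*(2*s+s^2))*t
          + (γ - 3/4*γ^2*(1+2*s))*t^2 + (3/4*γ^2)*t^3)
        ≤ ∫ t in (0:ℝ)..s, (1 - Real.exp (-γ * (s - t))) * (1 - t) := by
      apply intervalIntegral.integral_mono_on hs0
      · exact Continuous.intervalIntegrable (by fun_prop) _ _
      · exact Continuous.intervalIntegrable (by fun_prop) _ _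
      · intro t ht
        obtain ⟨hu0, hu1⟩ := key t ht
        have hexp : Real.exp (-γ * (s - t)) ≤ 1 - γ*(s-t) + 3/4 * (γ*(s-t))^2 := by
          have := exp_neg_le_quad hu0 hu1
          rwa [show -(γ*(s-t)) = -γ*(s-t) by ring] at this
        have ht1 : 0 ≤ 1 - t := by
          have := ht.2; linarith
        have hint := mul_le_mul_of_nonneg_right (sub_le_sub_left hexp 1) ht1
        calc (γ*s - 3/4*γ^2*s^2) + (-γ*(1+s) + 3/4*γ^2*(2*s+s^2))*t
              + (γ - 3/4*γ^2*(1+2*s))*t^2 + (3/4*γ^2)*t^3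
            = (1 - (1 - γ*(s-t) + 3/4 * (γ*(s-t))^2)) * (1-t) := by ring
          _ ≤ (1 - Real.exp (-γ * (s - t))) * (1 - t) := hint
    rw [integral_cubic] at hmono
    have hq1 : 0 ≤ γ * s^2 * (1/2 - s) :=
      mul_nonneg (mul_nonneg hγ.le (sq_nonneg s)) (by linarith)
    have hq2 : 0 ≤ γ * s^2 * (1 - γ*s) :=
      mul_nonneg (mul_nonneg hγ.le (sq_nonneg s)) (by linarith)
    have hq3 : 0 ≤ γ^2 * s^4 := by positivity
    have h2 : γ * (s^2/6) ≤ (γ*s - 3/4*γ^2*s^2)*s + (-γ*(1+s) + 3/4*γ^2*(2*s+s^2))*s^2/2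
        + (γ - 3/4*γ^2*(1+2*s))*s^3/3 + (3/4*γ^2)*s^4/4 := by
      nlinarith [hq1, hq2, hq3]
    have h3 := mul_le_mul_of_nonneg_left (le_trans h2 hmono) hγinv
    have h4 : (1/γ) * (γ * (s^2/6)) = s^2/6 := by field_simp
    linarith [h3]
  · -- upper bound
    have hmono : ∫ t in (0:ℝ)..s, (1 - Real.exp (-γ * (s - t))) * (1 - t / Real.sqrt 3)
        ≤ ∫ t in (0:ℝ)..s, (γ*s + (-γ)*t + 0*t^2 + 0*t^3) := by
      apply intervalIntegral.integral_mono_on hs0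
      · exact Continuous.intervalIntegrable (by fun_prop) _ _
      · exact Continuous.intervalIntegrable (by fun_prop) _ _
      · intro t ht
        obtain ⟨hu0, hu1⟩ := key t ht
        have hA0 : 0 ≤ 1 - Real.exp (-γ * (s - t)) := by
          have : Real.exp (-γ * (s - t)) ≤ 1 := by
            rw [Real.exp_le_one_iff]
            nlinarith
          linarith
        have hA1 : 1 - Real.exp (-γ * (s - t)) ≤ γ * (s - t) := by
          have := Real.add_one_le_exp (-(γ*(s-t)))
          rw [show -(γ*(s-t)) = -γ*(s-t) by ring] at this
          linarith
        have hsqrt : (1:ℝ) ≤ Real.sqrt 3 := by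
          rw [show (1:ℝ) = Real.sqrt 1 by simp]
          exact Real.sqrt_le_sqrt (by norm_num)
        have hB1 : t / Real.sqrt 3 ≤ 1 := by
          rw [div_le_one (by linarith)]
          have := ht.2
          linarith
        have hB0 : 0 ≤ t / Real.sqrt 3 := div_nonneg ht.1 (by linarith)
        calc (1 - Real.exp (-γ * (s - t))) * (1 - t / Real.sqrt 3)
            ≤ (γ * (s - t)) * 1 := by nlinarith
          _ = γ*s + (-γ)*t + 0*t^2 + 0*t^3 := by ring
    rw [integral_cubic] at hmono
    have h3 := mul_le_mul_of_nonneg_left hmono hγinv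
    have h4 : (1/γ) * ((γ*s)*s + (-γ)*s^2/2 + 0*s^3/3 + 0*s^4/4) = s^2/2 := by
      field_simp
      ring
    linarith [h3]
end

section
/- Let β > 0 and ω > 0, and let (u, v) : [0, S] → ℝ² be a continuously differentiable solution of the system u' = v, v' = 1 − (β/√ω)·v − √(2u) with u(s) ≥ 0 for all s ∈ [0, S]. Then the function s ↦ V(u(s), v(s)), where V(u,v) := (1/2)v² − u + (2√2/3)u^{3/2} + 1/6, is differentiable with derivative (d/ds)V(u(s), v(s)) = −(β/√ω)·v(s)² ≤ 0 for all s ∈ [0, S]; in particular V is a Lyapunov function for the system: V vanishes at the critical point (1/2, 0), is strictly positive elsewhere on Ω = {(u,v) : u ≥ 0}, and is nonincreasing along every solution. -/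
open Set

/-- `V(u,v) = (1/2)v² − u + (2√2/3)u^{3/2} + 1/6` is a Lyapunov function for
the system `u' = v, v' = 1 − (β/√ω)v − √(2u)`: along any solution with `u ≥ 0`
one has `(d/ds)V(u(s), v(s)) = −(β/√ω)v(s)² ≤ 0`; moreover `V(1/2, 0) = 0`,
`V > 0` elsewhere on `{u ≥ 0}`, and `V` is nonincreasing along the solution. -/
theorem stmt_15
    (β ω S : ℝ) (hβ : 0 < β) (hω : 0 < ω) (hS : 0 < S)
    (u v : ℝ → ℝ)
    (hu' : ∀ s ∈ Icc (0:ℝ) S, HasDerivWithinAt u (v s) (Icc 0 S) s)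
    (hv' : ∀ s ∈ Icc (0:ℝ) S,
      HasDerivWithinAt v (1 - (β / Real.sqrt ω) * v s - Real.sqrt (2 * u s))
        (Icc 0 S) s)
    (hunn : ∀ s ∈ Icc (0:ℝ) S, 0 ≤ u s) :
    (∀ s ∈ Icc (0:ℝ) S,
      HasDerivWithinAt
        (fun σ => (1/2) * (v σ)^2 - u σ
          + (2 * Real.sqrt 2 / 3) * (u σ) ^ ((3:ℝ)/2) + 1/6)
        (-(β / Real.sqrt ω) * (v s)^2) (Icc 0 S) s
      ∧ -(β / Real.sqrt ω) * (v s)^2 ≤ 0) ∧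
    ((1/2) * (0:ℝ)^2 - (1/2 : ℝ)
        + (2 * Real.sqrt 2 / 3) * (1/2 : ℝ) ^ ((3:ℝ)/2) + 1/6 = 0) ∧
    (∀ p q : ℝ, 0 ≤ p → (p, q) ≠ ((1/2 : ℝ), (0 : ℝ)) →
      0 < (1/2) * q^2 - p + (2 * Real.sqrt 2 / 3) * p ^ ((3:ℝ)/2) + 1/6) ∧
    (∀ s ∈ Icc (0:ℝ) S, ∀ t ∈ Icc (0:ℝ) S, s ≤ t →
      (1/2) * (v t)^2 - u t + (2 * Real.sqrt 2 / 3) * (u t) ^ ((3:ℝ)/2) + 1/6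
        ≤ (1/2) * (v s)^2 - u s + (2 * Real.sqrt 2 / 3) * (u s) ^ ((3:ℝ)/2) + 1/6) := by
  have hw : Real.sqrt 2 ^ 2 = 2 := Real.sq_sqrt (by norm_num)
  have hw0 : (0:ℝ) ≤ Real.sqrt 2 := Real.sqrt_nonneg 2
  -- the derivative of V along the solution
  have key : ∀ s ∈ Icc (0:ℝ) S,
      HasDerivWithinAt
        (fun σ => (1/2) * (v σ)^2 - u σ
          + (2 * Real.sqrt 2 / 3) * (u σ) ^ ((3:ℝ)/2) + 1/6)
        (-(β / Real.sqrt ω) * (v s)^2) (Icc 0 S) s := by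
    intro s hs
    have hu := hu' s hs
    have hv := hv' s hs
    have h32 : HasDerivWithinAt (fun σ => (u σ) ^ ((3:ℝ)/2))
        (((3:ℝ)/2) * (u s) ^ ((3:ℝ)/2 - 1) * v s) (Icc 0 S) s :=
      (Real.hasDerivAt_rpow_const (p := (3:ℝ)/2) (Or.inr (by norm_num))).comp_hasDerivWithinAt s hu
    have hsum := ((((hv.pow 2).const_mul (1/2:ℝ)).sub hu).add
      (h32.const_mul (2 * Real.sqrt 2 / 3))).add_const (1/6:ℝ)
    refine hsum.congr_deriv ?_
    have h1 : Real.sqrt (2 * u s) = Real.sqrt 2 * Real.sqrt (u s) :=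
      Real.sqrt_mul (by norm_num) _
    have h2 : (u s) ^ ((3:ℝ)/2 - 1) = Real.sqrt (u s) := by
      rw [show (3:ℝ)/2 - 1 = 1/2 by norm_num, Real.sqrt_eq_rpow]
    rw [h1, h2]
    ring
  have hcnn : 0 ≤ β / Real.sqrt ω := div_nonneg hβ.le (Real.sqrt_nonneg ω)
  refine ⟨fun s hs => ⟨key s hs, ?_⟩, ?_, ?_, ?_⟩
  · have : 0 ≤ (β / Real.sqrt ω) * (v s)^2 := mul_nonneg hcnn (sq_nonneg _)
    linarith
  · -- V(1/2,0) = 0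
    have h12 : (1/2:ℝ) ^ ((3:ℝ)/2) = Real.sqrt (1/2) ^ (3:ℕ) := by
      rw [← Real.rpow_natCast (Real.sqrt (1/2)) 3, Real.sqrt_eq_rpow,
        ← Real.rpow_mul (by norm_num)]
      norm_num
    have ha2 : Real.sqrt (1/2) ^ 2 = (1/2:ℝ) := Real.sq_sqrt (by norm_num)
    have hab : Real.sqrt (1/2) * Real.sqrt 2 = 1 := by
      rw [← Real.sqrt_mul (by norm_num)]; norm_num
    rw [h12]
    linear_combination (2/3) * Real.sqrt (1/2) ^ 2 * hab + (2/3) * ha2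
  · -- positivity away from the critical point
    intro p q hp hne
    have hr : Real.sqrt p ^ 2 = p := Real.sq_sqrt hp
    have hr0 : 0 ≤ Real.sqrt p := Real.sqrt_nonneg p
    set r := Real.sqrt p with hrdef
    set w := Real.sqrt 2 with hwdef
    have hp32 : p ^ ((3:ℝ)/2) = r ^ (3:ℕ) := by
      rw [hrdef, ← Real.rpow_natCast (Real.sqrt p) 3, Real.sqrt_eq_rpow,
        ← Real.rpow_mul hp]
      norm_num
    have hkey : (2 * w / 3) * r ^ 3 - r ^ 2 + 1/6
        = (1/6) * (w * r - 1) ^ 2 * (2 * (w * r) + 1) := by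
      linear_combination (-(w * r ^ 3) / 3 + r ^ 2 / 2) * hw
    have hwr0 : (0:ℝ) ≤ 2 * (w * r) + 1 := by positivity
    rw [hp32, ← hr]
    rcases eq_or_ne q 0 with hq | hq
    · have hpne : p ≠ 1/2 := by
        intro h; exact hne (by rw [h, hq])
      have hwr1 : w * r ≠ 1 := by
        intro h
        apply hpne
        have : (w * r) ^ 2 = 1 := by rw [h]; norm_num
        nlinarith [hw, hr]
      have h1 : 0 < (w * r - 1) ^ 2 := by
        have hne0 : w * r - 1 ≠ 0 := sub_ne_zero.mpr hwr1
        positivity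
      have h2 : 0 < (1/6) * (w * r - 1) ^ 2 * (2 * (w * r) + 1) := by
        have : 0 < 2 * (w * r) + 1 := by positivity
        positivity
      nlinarith [sq_nonneg q]
    · have hq2 : 0 < q ^ 2 := by positivity
      have h2 : 0 ≤ (1/6) * (w * r - 1) ^ 2 * (2 * (w * r) + 1) := by positivity
      nlinarith
  · -- monotonicity
    have hcont : ContinuousOn
        (fun σ => (1/2) * (v σ)^2 - u σ
          + (2 * Real.sqrt 2 / 3) * (u σ) ^ ((3:ℝ)/2) + 1/6) (Icc 0 S) :=
      fun s hs => (key s hs).continuousWithinAt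
    have hanti : AntitoneOn
        (fun σ => (1/2) * (v σ)^2 - u σ
          + (2 * Real.sqrt 2 / 3) * (u σ) ^ ((3:ℝ)/2) + 1/6) (Icc 0 S) := by
      apply antitoneOn_of_deriv_nonpos (convex_Icc 0 S) hcont
      · intro x hx
        rw [interior_Icc] at hx
        exact ((key x (Ioo_subset_Icc_self hx)).hasDerivAt
          (Icc_mem_nhds hx.1 hx.2)).differentiableAt.differentiableWithinAt
      · intro x hx
        rw [interior_Icc] at hx
        rw [((key x (Ioo_subset_Icc_self hx)).hasDerivAt
          (Icc_mem_nhds hx.1 hx.2)).deriv]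
        have : 0 ≤ (β / Real.sqrt ω) * (v x)^2 := mul_nonneg hcnn (sq_nonneg _)
        linarith
    exact fun s hs t ht hst => hanti hs ht hst
end

section
/- Let α ∈ [0, 1] and set C := −α²/2 + (2√2/3)·(α²/2)^{3/2} + 1/6. Then both u_min := α²/2 and u_max := (9/8)·(1/2 − α/3 + (1/6)·√(9 + 12α − 12α²))² are nonnegative solutions of the equation −u + (2√2/3)·u^{3/2} + 1/6 = C, and u_min ≤ u_max ≤ 9/8, with 0 < u_min < u_max < 9/8 when α ∈ (0,1) and u_min = u_max = 1/2 when α = 1. -/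
/-!
In the variable `w = √(2u) ≥ 0` one has `(2√2/3) u^{3/2} = w³/3`, so the equation becomes the
cubic `w³/3 − w²/2 = α³/3 − α²/2`, i.e. `(w − α)(2w² + (2α − 3)w + 2α² − 3α) = 0`.
Its root `w = α` gives `u_min`, and the larger root `w = (3 − 2α + √(9 + 12α − 12α²))/4` of
the quadratic factor gives `u_max`; the ordering `α ≤ w ≤ 3/2` is a comparison of squares.
-/

open Set

lemma two_sqrt_two_div_three_mul_rpow_half_sq {w : ℝ} (hw : 0 ≤ w) :
    2 * Real.sqrt 2 / 3 * (w ^ 2 / 2) ^ ((3:ℝ)/2) = w ^ 3 / 3 := by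
  have h2 : Real.sqrt 2 ^ 2 = 2 := Real.sq_sqrt zero_le_two
  have hsqrt : Real.sqrt (w ^ 2 / 2) = w / Real.sqrt 2 := by
    rw [Real.sqrt_div' _ zero_le_two, Real.sqrt_sq hw]
  have hne : Real.sqrt 2 ≠ 0 := by positivity
  rw [Real.rpow_div_two_eq_sqrt 3 (by positivity), hsqrt]
  norm_cast
  field_simp
  linear_combination (-w ^ 3) * h2

section SecondRoot

variable {α s : ℝ} (hs : s ^ 2 = 9 + 12 * α - 12 * α ^ 2)
include hs

lemma second_root_cubic_eq :
    -((3 - 2 * α + s) / 4) ^ 2 / 2 + ((3 - 2 * α + s) / 4) ^ 3 / 3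
      = -α ^ 2 / 2 + α ^ 3 / 3 := by
  linear_combination (1/64 - α/32 + s/192) * hs

lemma le_second_root (hs0 : 0 ≤ s) (hα0 : 0 ≤ α) (hα1 : α ≤ 1) : α ≤ (3 - 2 * α + s) / 4 := by
  nlinarith [mul_nonneg hα0 (sub_nonneg.2 hα1)]

lemma lt_second_root (hs0 : 0 ≤ s) (hα0 : 0 < α) (hα1 : α < 1) : α < (3 - 2 * α + s) / 4 := by
  nlinarith [mul_pos hα0 (sub_pos.2 hα1)]

lemma second_root_le : (3 - 2 * α + s) / 4 ≤ 3 / 2 := by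
  nlinarith

lemma second_root_lt (hα0 : 0 < α) : (3 - 2 * α + s) / 4 < 3 / 2 := by
  nlinarith

end SecondRoot

/-- For `α ∈ [0, 1]` and `C = V(α²/2, 0)`, the numbers `u_min = α²/2` and
`u_max = (9/8)(1/2 − α/3 + (1/6)√(9 + 12α − 12α²))²` are nonnegative solutions
of `−u + (2√2/3)u^{3/2} + 1/6 = C`, with `u_min ≤ u_max ≤ 9/8`, strictly
ordered in `(0, 9/8)` for `α ∈ (0,1)`, and both equal to `1/2` for `α = 1`. -/
theorem stmt_16
    (α : ℝ) (hα : α ∈ Icc (0:ℝ) 1) :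
    let C : ℝ := -α^2/2 + (2 * Real.sqrt 2 / 3) * (α^2/2) ^ ((3:ℝ)/2) + 1/6
    let umin : ℝ := α^2/2
    let umax : ℝ :=
      (9/8) * (1/2 - α/3 + (1/6) * Real.sqrt (9 + 12*α - 12*α^2))^2
    0 ≤ umin ∧ 0 ≤ umax ∧
    (-umin + (2 * Real.sqrt 2 / 3) * umin ^ ((3:ℝ)/2) + 1/6 = C) ∧
    (-umax + (2 * Real.sqrt 2 / 3) * umax ^ ((3:ℝ)/2) + 1/6 = C) ∧
    umin ≤ umax ∧ umax ≤ 9/8 ∧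
    (0 < α → α < 1 → 0 < umin ∧ umin < umax ∧ umax < 9/8) ∧
    (α = 1 → umin = 1/2 ∧ umax = 1/2) := by
  obtain ⟨hα0, hα1⟩ := hα
  intro C umin umax
  obtain ⟨s, hs0, hs, hsqrt⟩ : ∃ s, 0 ≤ s ∧ s ^ 2 = 9 + 12*α - 12*α^2 ∧
      Real.sqrt (9 + 12*α - 12*α^2) = s :=
    ⟨_, Real.sqrt_nonneg _, Real.sq_sqrt (by nlinarith), rfl⟩
  obtain ⟨w, hw⟩ : ∃ w, (3 - 2 * α + s) / 4 = w := ⟨_, rfl⟩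
  have hαw : α ≤ w := hw ▸ le_second_root hs hs0 hα0 hα1
  have hw0 : 0 ≤ w := hα0.trans hαw
  have humin : umin = α ^ 2 / 2 := rfl
  have humax : umax = w ^ 2 / 2 := by simp only [umax, hsqrt, ← hw]; ring
  have hC : C = -α^2/2 + α^3/3 + 1/6 := by
    simp only [C]; rw [two_sqrt_two_div_three_mul_rpow_half_sq hα0]
  refine ⟨by positivity, by positivity, by simp only [umin, C]; ring, ?_, ?_, ?_, ?_, ?_⟩
  · rw [humax, two_sqrt_two_div_three_mul_rpow_half_sq hw0, hC, ← second_root_cubic_eq hs, hw]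
    ring
  · rw [humin, humax]; gcongr
  · rw [humax]; nlinarith [hw ▸ second_root_le hs]
  · intro h0 h1
    refine ⟨by positivity, by rw [humin, humax]; gcongr; exact hw ▸ lt_second_root hs hs0 h0 h1, ?_⟩
    rw [humax]; nlinarith [hw ▸ second_root_lt hs h0]
  · rintro rfl
    have hs3 : s = 3 := by nlinarith
    refine ⟨by norm_num [umin], by rw [humax, ← hw, hs3]; norm_num⟩
end

section
/- Let β > 0, ω > 0 and α ∈ [0, 3/2], and set C := −α²/2 + (2√2/3)·(α²/2)^{3/2} + 1/6 and Ω₀ := {(u,v) : u ≥ 0 and (1/2)v² − u + (2√2/3)u^{3/2} + 1/6 ≤ C}. Then every global solution (u, v) : [0, ∞) → ℝ² of the system u' = v, v' = 1 − (β/√ω)·v − √(2u), with u(s) ≥ 0 for all s ≥ 0 and with initial point (u(0), v(0)) ∈ Ω₀, remains in Ω₀ for all s ≥ 0 and converges to the critical point: (u(s), v(s)) → (1/2, 0) as s → ∞. -/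
open Set Filter

lemma antiIcc (f f' : ℝ → ℝ) (a b : ℝ)
    (hf : ∀ s ∈ Icc a b, HasDerivWithinAt f (f' s) (Icc a b) s)
    (h0 : ∀ s ∈ Icc a b, f' s ≤ 0) : AntitoneOn f (Icc a b) := by
  apply antitoneOn_of_deriv_nonpos (convex_Icc a b)
  · exact fun s hs => (hf s hs).continuousWithinAt
  · intro x hx
    rw [interior_Icc] at hx
    exact ((hf x (Ioo_subset_Icc_self hx)).hasDerivAt
      (Icc_mem_nhds hx.1 hx.2)).differentiableAt.differentiableWithinAt
  · intro x hx
    rw [interior_Icc] at hx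
    rw [((hf x (Ioo_subset_Icc_self hx)).hasDerivAt (Icc_mem_nhds hx.1 hx.2)).deriv]
    exact h0 x (Ioo_subset_Icc_self hx)

lemma antiIci (f f' : ℝ → ℝ) (a : ℝ)
    (hf : ∀ s ∈ Ici a, HasDerivWithinAt f (f' s) (Ici a) s)
    (h0 : ∀ s ∈ Ici a, f' s ≤ 0) : AntitoneOn f (Ici a) := by
  intro x hx y hy hxy
  have H : AntitoneOn f (Icc x y) :=
    antiIcc f f' x y
      (fun s hs => ((hf s (le_trans hx hs.1)).mono (fun t ht => le_trans hx ht.1)))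
      (fun s hs => h0 s (le_trans hx hs.1))
  exact H (left_mem_Icc.2 hxy) (right_mem_Icc.2 hxy) hxy

lemma rpow32 (x : ℝ) (hx : 0 ≤ x) : x ^ ((3:ℝ)/2) = Real.sqrt x ^ 3 := by
  rw [Real.sqrt_eq_rpow, ← Real.rpow_natCast (x ^ ((1:ℝ)/2)) 3, ← Real.rpow_mul hx]
  norm_num

lemma g_eq (x : ℝ) (hx : 0 ≤ x) :
    -x + (2 * Real.sqrt 2 / 3) * x ^ ((3:ℝ)/2) + 1/6
      = (Real.sqrt 2 * Real.sqrt x - 1)^2 * (Real.sqrt 2 * Real.sqrt x / 3 + 1/6) := by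
  rw [rpow32 x hx]
  have h2 : Real.sqrt 2 ^ 2 = 2 := Real.sq_sqrt (by norm_num)
  have hx2 : Real.sqrt x ^ 2 = x := Real.sq_sqrt hx
  linear_combination hx2 + (Real.sqrt x ^ 2 / 2 - Real.sqrt 2 * Real.sqrt x ^ 3 / 3) * h2

lemma g_nonneg (x : ℝ) (hx : 0 ≤ x) :
    0 ≤ -x + (2 * Real.sqrt 2 / 3) * x ^ ((3:ℝ)/2) + 1/6 := by
  rw [g_eq x hx]
  have : 0 ≤ Real.sqrt 2 * Real.sqrt x / 3 + 1/6 := by positivity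
  exact mul_nonneg (sq_nonneg _) this

lemma sqrt_sub_le (a b : ℝ) (ha : 0 ≤ a) (hab : a ≤ b) :
    Real.sqrt b - Real.sqrt a ≤ Real.sqrt (b - a) := by
  have h1 : Real.sqrt (b-a) ^ 2 = b - a := Real.sq_sqrt (by linarith)
  have h2 : Real.sqrt a ^ 2 = a := Real.sq_sqrt ha
  have h3 : Real.sqrt b ^ 2 = b := Real.sq_sqrt (le_trans ha hab)
  nlinarith [Real.sqrt_nonneg a, Real.sqrt_nonneg b, Real.sqrt_nonneg (b-a),
    mul_nonneg (Real.sqrt_nonneg (b-a)) (Real.sqrt_nonneg a),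
    sq_nonneg (Real.sqrt (b-a) + Real.sqrt a - Real.sqrt b)]

lemma abs_sqrt_sub (a b : ℝ) (ha : 0 ≤ a) (hb : 0 ≤ b) :
    |Real.sqrt a - Real.sqrt b| ≤ Real.sqrt |a - b| := by
  rcases le_total a b with h | h
  · rw [abs_sub_comm (Real.sqrt a) (Real.sqrt b),
      abs_of_nonneg (sub_nonneg.2 (Real.sqrt_le_sqrt h)),
      abs_sub_comm a b, abs_of_nonneg (sub_nonneg.2 h)]
    exact sqrt_sub_le a b ha h
  · rw [abs_of_nonneg (sub_nonneg.2 (Real.sqrt_le_sqrt h)),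
      abs_of_nonneg (sub_nonneg.2 h)]
    exact sqrt_sub_le b a hb h

set_option maxHeartbeats 1000000 in
/-- LaSalle-type global stability: every global nonnegative solution of the
system `u' = v, v' = 1 − (β/√ω)v − √(2u)` starting in the sublevel set `Ω₀` of
the Lyapunov function `V(u,v) = (1/2)v² − u + (2√2/3)u^{3/2} + 1/6` at level
`C = V(α²/2, 0)` remains in `Ω₀` and converges to the critical point `(1/2, 0)`. -/
theorem stmt_17
    (β ω α : ℝ) (hβ : 0 < β) (hω : 0 < ω) (hα : α ∈ Icc (0:ℝ) (3/2))
    (u v : ℝ → ℝ)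
    (hu' : ∀ s ∈ Ici (0:ℝ), HasDerivWithinAt u (v s) (Ici 0) s)
    (hv' : ∀ s ∈ Ici (0:ℝ),
      HasDerivWithinAt v (1 - (β / Real.sqrt ω) * v s - Real.sqrt (2 * u s))
        (Ici 0) s)
    (hunn : ∀ s ∈ Ici (0:ℝ), 0 ≤ u s)
    (hinit : (1/2) * (v 0)^2 - u 0 + (2 * Real.sqrt 2 / 3) * (u 0) ^ ((3:ℝ)/2) + 1/6
      ≤ -α^2/2 + (2 * Real.sqrt 2 / 3) * (α^2/2) ^ ((3:ℝ)/2) + 1/6) :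
    (∀ s ∈ Ici (0:ℝ),
      0 ≤ u s ∧
      (1/2) * (v s)^2 - u s + (2 * Real.sqrt 2 / 3) * (u s) ^ ((3:ℝ)/2) + 1/6
        ≤ -α^2/2 + (2 * Real.sqrt 2 / 3) * (α^2/2) ^ ((3:ℝ)/2) + 1/6) ∧
    Tendsto u atTop (nhds (1/2)) ∧ Tendsto v atTop (nhds 0) := by
  obtain ⟨k, hk_def⟩ : ∃ k : ℝ, k = β / Real.sqrt ω := ⟨_, rfl⟩
  rw [← hk_def] at hv'
  have hk : 0 < k := hk_def ▸ div_pos hβ (Real.sqrt_pos.2 hω)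
  obtain ⟨V, hV_def⟩ : ∃ V : ℝ → ℝ, V = fun s =>
    (1/2) * (v s)^2 - u s + (2 * Real.sqrt 2 / 3) * (u s) ^ ((3:ℝ)/2) + 1/6 := ⟨_, rfl⟩
  obtain ⟨C, hC_def⟩ : ∃ C : ℝ,
    C = -α^2/2 + (2 * Real.sqrt 2 / 3) * (α^2/2) ^ ((3:ℝ)/2) + 1/6 := ⟨_, rfl⟩
  have hinit' : V 0 ≤ C := by rw [hV_def, hC_def]; exact hinit
  -- derivative of V
  have hVd : ∀ s ∈ Ici (0:ℝ), HasDerivWithinAt V (-(k * (v s)^2)) (Ici 0) s := by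
    intro s hs
    rw [hV_def]
    have hu0 : 0 ≤ u s := hunn s hs
    have t1 : HasDerivWithinAt (fun t => (1/2 : ℝ) * (v t)^2)
        ((1/2) * (2 * v s ^ 1 * (1 - k * v s - Real.sqrt (2 * u s)))) (Ici 0) s :=
      ((hv' s hs).pow 2).const_mul (1/2)
    have t3 : HasDerivWithinAt (fun t => (2 * Real.sqrt 2 / 3) * (u t) ^ ((3:ℝ)/2))
        ((2 * Real.sqrt 2 / 3) * (((3:ℝ)/2 * u s ^ ((3:ℝ)/2 - 1)) * v s)) (Ici 0) s := by
      have hr : HasDerivAt (fun x : ℝ => x ^ ((3:ℝ)/2))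
          ((3:ℝ)/2 * u s ^ ((3:ℝ)/2 - 1)) (u s) :=
        Real.hasDerivAt_rpow_const (Or.inr (by norm_num))
      exact (hr.comp_hasDerivWithinAt s (hu' s hs)).const_mul _
    have := ((t1.sub (hu' s hs)).add t3).add_const (1/6)
    convert this using 1
    case e'_4 => rfl
    case e'_5 => rfl
    case e'_8 => rfl
    have hsq : Real.sqrt (2 * u s) = Real.sqrt 2 * Real.sqrt (u s) :=
      Real.sqrt_mul (by norm_num) _
    have hpow : (u s) ^ ((3:ℝ)/2 - 1) = Real.sqrt (u s) := by
      rw [show ((3:ℝ)/2 - 1) = (1:ℝ)/2 by norm_num, ← Real.sqrt_eq_rpow]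
    rw [hsq, hpow]; ring
  -- V is antitone on [0,∞)
  have hVmono : AntitoneOn V (Ici 0) :=
    antiIci V (fun s => -(k * (v s)^2)) 0 hVd
      (fun s _ => neg_nonpos.2 (mul_nonneg hk.le (sq_nonneg _)))
  have hVle : ∀ s ∈ Ici (0:ℝ), V s ≤ C :=
    fun s hs => le_trans (hVmono Set.self_mem_Ici hs hs) hinit'
  have hVnn : ∀ s ∈ Ici (0:ℝ), 0 ≤ V s := by
    intro s hs
    have h1 := g_nonneg (u s) (hunn s hs)
    have h2 := sq_nonneg (v s)
    rw [hV_def]; nlinarith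
  have hC16 : C ≤ 1/6 := by
    have hx : (0:ℝ) ≤ α^2/2 := by positivity
    have key : Real.sqrt 2 * Real.sqrt (α^2/2) = α := by
      rw [← Real.sqrt_mul (by norm_num : (0:ℝ) ≤ 2), show 2*(α^2/2) = α^2 by ring,
        Real.sqrt_sq hα.1]
    have ht2 : Real.sqrt (α^2/2) ^ 2 = α^2/2 := Real.sq_sqrt hx
    have h5 : Real.sqrt 2 * Real.sqrt (α^2/2) ^ 3 = α * (α^2/2) := by
      calc Real.sqrt 2 * Real.sqrt (α^2/2) ^ 3
          = (Real.sqrt 2 * Real.sqrt (α^2/2)) * Real.sqrt (α^2/2) ^ 2 := by ring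
        _ = α * (α^2/2) := by rw [key, ht2]
    rw [hC_def, rpow32 _ hx]
    nlinarith [h5, hα.1, hα.2, sq_nonneg α]
  -- global bounds
  have hvb : ∀ s ∈ Ici (0:ℝ), (v s)^2 ≤ 1/3 := by
    intro s hs
    have h1 := hVle s hs
    have h2 := g_nonneg (u s) (hunn s hs)
    rw [hV_def] at h1
    simp only [] at h1
    nlinarith
  have hub : ∀ s ∈ Ici (0:ℝ), u s ≤ 9/8 := by
    intro s hs
    by_contra hcon
    push_neg at hcon
    have h1 := hVle s hs
    have hsqv := sq_nonneg (v s)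
    rw [hV_def] at h1
    simp only [] at h1
    rw [rpow32 _ (hunn s hs)] at h1
    have ht2 : Real.sqrt (u s) ^ 2 = u s := Real.sq_sqrt (hunn s hs)
    have hr : (3/2 : ℝ) < Real.sqrt (2 * u s) := by
      rw [show (3/2:ℝ) = Real.sqrt ((3/2)^2) from (Real.sqrt_sq (by norm_num)).symm]
      exact Real.sqrt_lt_sqrt (by norm_num) (by nlinarith)
    have h5 : Real.sqrt 2 * Real.sqrt (u s)^3 = Real.sqrt (2*u s) * u s := by
      calc Real.sqrt 2 * Real.sqrt (u s)^3
          = (Real.sqrt 2 * Real.sqrt (u s)) * Real.sqrt (u s)^2 := by ring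
        _ = Real.sqrt (2*u s) * u s := by
            rw [← Real.sqrt_mul (by norm_num : (0:ℝ) ≤ 2), ht2]
    nlinarith [h5, hr, hcon, hC16, h1, hsqv]
  have hv1 : ∀ s ∈ Ici (0:ℝ), |v s| ≤ 1 := by
    intro s hs
    rw [abs_le]
    constructor <;> nlinarith [hvb s hs, sq_nonneg (v s)]
  have hsb : ∀ s ∈ Ici (0:ℝ), Real.sqrt (2 * u s) ≤ 3/2 := by
    intro s hs
    have h : (2 : ℝ) * u s ≤ (3/2)^2 := by nlinarith [hub s hs]
    calc Real.sqrt (2 * u s) ≤ Real.sqrt ((3/2)^2) := Real.sqrt_le_sqrt h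
      _ = 3/2 := Real.sqrt_sq (by norm_num)
  -- monotone limit of V
  obtain ⟨W, hW_def⟩ : ∃ W : ℝ → ℝ, W = fun s => V (max s 0) := ⟨_, rfl⟩
  have hWanti : Antitone W := by
    intro s t hst
    rw [hW_def]
    exact hVmono (le_max_right s 0) (le_max_right t 0) (max_le_max hst le_rfl)
  have hWbdd : BddBelow (Set.range W) := by
    refine ⟨0, ?_⟩
    rintro y ⟨s, rfl⟩
    rw [hW_def]
    exact hVnn _ (le_max_right s 0)
  obtain ⟨L, hL_def⟩ : ∃ L : ℝ, L = ⨅ s, W s := ⟨_, rfl⟩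
  have hWlim : Tendsto W atTop (nhds L) := by
    rw [hL_def]; exact tendsto_atTop_ciInf hWanti hWbdd
  have hVL : Tendsto V atTop (nhds L) := by
    apply hWlim.congr'
    filter_upwards [eventually_ge_atTop (0:ℝ)] with s hs
    rw [hW_def]
    simp [max_eq_left hs]
  have hLleV : ∀ s ∈ Ici (0:ℝ), L ≤ V s := by
    intro s hs
    have h1 : L ≤ W s := by rw [hL_def]; exact ciInf_le hWbdd s
    have he : W s = V s := by rw [hW_def]; simp [max_eq_left (show (0:ℝ) ≤ s from hs)]
    linarith [he.le, he.ge]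
  -- general monotonicity workhorse
  have keyMono : ∀ (f f' : ℝ → ℝ) (a b : ℝ), 0 ≤ a → a ≤ b →
      (∀ s ∈ Ici (0:ℝ), HasDerivWithinAt f (f' s) (Ici 0) s) →
      (∀ s ∈ Icc a b, f' s ≤ 0) → f b ≤ f a := by
    intro f f' a b ha hab hd h0
    have hsub : Icc a b ⊆ Ici (0:ℝ) := fun t ht => le_trans ha ht.1
    exact antiIcc f f' a b (fun s hs => (hd s (hsub hs)).mono hsub) h0
      (left_mem_Icc.2 hab) (right_mem_Icc.2 hab) hab
  obtain ⟨M, hM_def⟩ : ∃ M : ℝ, M = k + 5/2 := ⟨_, rfl⟩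
  have hM0 : (0:ℝ) < M := by rw [hM_def]; linarith
  have hvder_bound : ∀ s ∈ Ici (0:ℝ), |1 - k * v s - Real.sqrt (2 * u s)| ≤ M := by
    intro s hs
    have h1 := abs_le.1 (hv1 s hs)
    have hkv : |k * v s| ≤ k := by
      rw [abs_mul, abs_of_pos hk]
      calc k * |v s| ≤ k * 1 := mul_le_mul_of_nonneg_left (hv1 s hs) hk.le
        _ = k := mul_one k
    have h2 := abs_le.1 hkv
    have h3 : 0 ≤ Real.sqrt (2 * u s) := Real.sqrt_nonneg _
    have h4 := hsb s hs
    rw [abs_le]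
    constructor
    · rw [hM_def] at *; linarith
    · rw [hM_def] at *; linarith
  have hvLip : ∀ a b : ℝ, 0 ≤ a → a ≤ b → |v b - v a| ≤ M * (b - a) := by
    intro a b ha hab
    have d1 : ∀ s ∈ Ici (0:ℝ), HasDerivWithinAt (fun t => v t - M * t)
        ((1 - k * v s - Real.sqrt (2 * u s)) - M * 1) (Ici 0) s :=
      fun s hs => (hv' s hs).sub ((hasDerivWithinAt_id s (Ici 0)).const_mul M)
    have d2 : ∀ s ∈ Ici (0:ℝ), HasDerivWithinAt (fun t => -v t - M * t)
        (-(1 - k * v s - Real.sqrt (2 * u s)) - M * 1) (Ici 0) s :=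
      fun s hs => (hv' s hs).neg.sub ((hasDerivWithinAt_id s (Ici 0)).const_mul M)
    have m1 : v b - M * b ≤ v a - M * a := keyMono _ _ a b ha hab d1
      (fun s hs => by
        have := (abs_le.1 (hvder_bound s (le_trans ha hs.1))).2; linarith)
    have m2 : -v b - M * b ≤ -v a - M * a := keyMono _ _ a b ha hab d2
      (fun s hs => by
        have := (abs_le.1 (hvder_bound s (le_trans ha hs.1))).1; linarith)
    rw [abs_le]
    constructor <;> nlinarith [m1, m2]
  have hv0 : Tendsto v atTop (nhds 0) := by
    rw [Metric.tendsto_atTop]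
    intro ε hε
    obtain ⟨ε', hep_def⟩ : ∃ x : ℝ, x = min ε 1 := ⟨_, rfl⟩
    have hε'0 : 0 < ε' := by rw [hep_def]; exact lt_min hε one_pos
    have hε'ε : ε' ≤ ε := by rw [hep_def]; exact min_le_left _ _
    obtain ⟨τ, htau_def⟩ : ∃ x : ℝ, x = ε' / (2 * M) := ⟨_, rfl⟩
    have hτ0 : 0 < τ := by rw [htau_def]; exact div_pos hε'0 (by linarith)
    obtain ⟨c, hc_def⟩ : ∃ x : ℝ, x = k * (ε'/2)^2 * τ := ⟨_, rfl⟩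
    have hc0 : 0 < c := by
      rw [hc_def]; exact mul_pos (mul_pos hk (pow_pos (by linarith) 2)) hτ0
    obtain ⟨T, hT⟩ := Metric.tendsto_atTop.1 hVL c hc0
    refine ⟨max T 0, fun s hsT => ?_⟩
    have hs0 : (0:ℝ) ≤ s := le_trans (le_max_right T 0) hsT
    rw [Real.dist_eq, sub_zero]
    by_contra hcon
    push_neg at hcon
    have hεv : ε' ≤ |v s| := le_trans hε'ε hcon
    have hwin : ∀ t ∈ Icc s (s+τ), (ε'/2)^2 ≤ (v t)^2 := by
      intro t ht
      have h1 : |v t - v s| ≤ M * (t - s) := hvLip s t hs0 ht.1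
      have h2 : M * (t - s) ≤ ε'/2 := by
        have h3 : t - s ≤ τ := by linarith [ht.2]
        have h6 : M * (t - s) ≤ M * τ := by nlinarith
        have hMτ : M * τ = ε'/2 := by
          rw [htau_def]; field_simp
        linarith
      have h4 : |v s| - |v t| ≤ |v t - v s| :=
        le_trans (abs_sub_abs_le_abs_sub _ _) (le_of_eq (abs_sub_comm _ _))
      have h5 : ε'/2 ≤ |v t| := by linarith
      have h7 := pow_le_pow_left₀ (by positivity : (0:ℝ) ≤ ε'/2) h5 2
      rwa [sq_abs] at h7
    have hdrop : V (s+τ) ≤ V s - c := by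
      have d : ∀ t ∈ Ici (0:ℝ), HasDerivWithinAt (fun t => V t + (k * (ε'/2)^2) * t)
          (-(k * (v t)^2) + (k * (ε'/2)^2) * 1) (Ici 0) t :=
        fun t ht => (hVd t ht).add ((hasDerivWithinAt_id t (Ici 0)).const_mul (k * (ε'/2)^2))
      have m : V (s+τ) + (k * (ε'/2)^2) * (s+τ) ≤ V s + (k * (ε'/2)^2) * s :=
        keyMono _ _ s (s+τ) hs0 (by linarith) d
          (fun t ht => by nlinarith [hwin t ht, hk.le])
      have e : (k * (ε'/2)^2) * (s+τ) = (k * (ε'/2)^2) * s + c := by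
        rw [hc_def]; ring
      linarith [m, e.le, e.ge]
    have h6 := hLleV (s+τ) (by simp only [mem_Ici]; linarith)
    have h7 := hT s (le_trans (le_max_left T 0) hsT)
    rw [Real.dist_eq] at h7
    have h8 := (abs_lt.1 h7).2
    linarith
  -- convergence of sqrt(2u) to 1
  have hq : Tendsto (fun s => Real.sqrt (2 * u s)) atTop (nhds 1) := by
    rw [Metric.tendsto_atTop]
    intro δ hδ
    obtain ⟨δ', hdp_def⟩ : ∃ x : ℝ, x = min δ 1 := ⟨_, rfl⟩
    have hδ'0 : 0 < δ' := by rw [hdp_def]; exact lt_min hδ one_pos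
    have hδ'δ : δ' ≤ δ := by rw [hdp_def]; exact min_le_left _ _
    obtain ⟨τ, htau_def⟩ : ∃ x : ℝ, x = δ'^2/8 := ⟨_, rfl⟩
    have hτ0 : 0 < τ := by rw [htau_def]; exact div_pos (pow_pos hδ'0 2) (by norm_num)
    obtain ⟨η, heta_def⟩ : ∃ x : ℝ, x = min (δ'/(4*k)) (δ'*τ/16) := ⟨_, rfl⟩
    have hη0 : 0 < η := by
      rw [heta_def]
      exact lt_min (div_pos hδ'0 (by linarith)) (div_pos (mul_pos hδ'0 hτ0) (by norm_num))
    have hη1 : η ≤ δ'/(4*k) := by rw [heta_def]; exact min_le_left _ _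
    have hη2 : η ≤ δ'*τ/16 := by rw [heta_def]; exact min_le_right _ _
    obtain ⟨T1, hT1⟩ := Metric.tendsto_atTop.1 hv0 η hη0
    refine ⟨max T1 0, fun s hsT => ?_⟩
    have hs0 : (0:ℝ) ≤ s := le_trans (le_max_right T1 0) hsT
    rw [Real.dist_eq]
    by_contra hcon
    push_neg at hcon
    have hδcon : δ' ≤ |Real.sqrt (2 * u s) - 1| := le_trans hδ'δ hcon
    have hvsmall : ∀ t, s ≤ t → |v t| ≤ η := by
      intro t hst
      have h := hT1 t (le_trans (le_max_left T1 0) (le_trans hsT hst))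
      rw [Real.dist_eq, sub_zero] at h
      exact h.le
    have hkη : k * η ≤ δ'/4 := by
      have h1 : k * η ≤ k * (δ'/(4*k)) := mul_le_mul_of_nonneg_left hη1 hk.le
      have h2 : k * (δ'/(4*k)) = δ'/4 := by field_simp
      linarith
    -- u is 1-Lipschitz
    have huLip : ∀ t ∈ Icc s (s+τ), |u t - u s| ≤ t - s := by
      intro t ht
      have d1 : ∀ r ∈ Ici (0:ℝ), HasDerivWithinAt (fun t => u t - 1 * t)
          (v r - 1 * 1) (Ici 0) r :=
        fun r hr => (hu' r hr).sub ((hasDerivWithinAt_id r (Ici 0)).const_mul 1)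
      have d2 : ∀ r ∈ Ici (0:ℝ), HasDerivWithinAt (fun t => -u t - 1 * t)
          (-(v r) - 1 * 1) (Ici 0) r :=
        fun r hr => (hu' r hr).neg.sub ((hasDerivWithinAt_id r (Ici 0)).const_mul 1)
      have m1 : u t - 1 * t ≤ u s - 1 * s := keyMono _ _ s t hs0 ht.1 d1
        (fun r hr => by
          have := (abs_le.1 (hv1 r (le_trans hs0 hr.1))).2; linarith)
      have m2 : -u t - 1 * t ≤ -u s - 1 * s := keyMono _ _ s t hs0 ht.1 d2
        (fun r hr => by
          have := (abs_le.1 (hv1 r (le_trans hs0 hr.1))).1; linarith)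
      rw [abs_le]
      constructor <;> nlinarith [m1, m2]
    have hwin : ∀ t ∈ Icc s (s+τ),
        |Real.sqrt (2 * u t) - Real.sqrt (2 * u s)| ≤ δ'/2 := by
      intro t ht
      have ht0 : (0:ℝ) ≤ t := le_trans hs0 ht.1
      have h1 : |2 * u t - 2 * u s| ≤ 2 * τ := by
        have h2 := huLip t ht
        have h3 : |2 * u t - 2 * u s| = 2 * |u t - u s| := by
          rw [show 2 * u t - 2 * u s = 2 * (u t - u s) by ring, abs_mul]
          norm_num
        rw [h3]
        have := ht.2
        linarith [h2]
      calc |Real.sqrt (2 * u t) - Real.sqrt (2 * u s)|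
          ≤ Real.sqrt |2 * u t - 2 * u s| :=
            abs_sqrt_sub _ _ (by linarith [hunn t ht0]) (by linarith [hunn s hs0])
        _ ≤ Real.sqrt (2 * τ) := Real.sqrt_le_sqrt h1
        _ = δ'/2 := by
            rw [htau_def, show 2 * (δ'^2/8) = (δ'/2)^2 by ring,
              Real.sqrt_sq (by positivity)]
    rcases le_or_gt (Real.sqrt (2 * u s)) 1 with hcase | hcase
    · -- sqrt(2u s) ≤ 1 - δ' : v grows
      have hws : Real.sqrt (2 * u s) ≤ 1 - δ' := by
        rw [abs_sub_comm, abs_of_nonneg (by linarith)] at hδcon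
        linarith
      have hslope : ∀ t ∈ Icc s (s+τ), δ'/4 ≤ 1 - k * v t - Real.sqrt (2 * u t) := by
        intro t ht
        have h2 := (abs_le.1 (hwin t ht)).2
        have h3 := (abs_le.1 (hvsmall t ht.1)).2
        have h4 : k * v t ≤ k * η := mul_le_mul_of_nonneg_left h3 hk.le
        linarith [hkη]
      have d : ∀ t ∈ Ici (0:ℝ), HasDerivWithinAt (fun t => (δ'/4) * t - v t)
          ((δ'/4) * 1 - (1 - k * v t - Real.sqrt (2 * u t))) (Ici 0) t :=
        fun t ht => ((hasDerivWithinAt_id t (Ici 0)).const_mul (δ'/4)).sub (hv' t ht)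
      have m : (δ'/4) * (s+τ) - v (s+τ) ≤ (δ'/4) * s - v s :=
        keyMono _ _ s (s+τ) hs0 (by linarith) d
          (fun t ht => by have := hslope t ht; linarith)
      have hv1s := abs_le.1 (hvsmall s le_rfl)
      have hv2s := abs_le.1 (hvsmall (s+τ) (by linarith))
      nlinarith [m, hη2, hδ'0, hτ0, hv1s.1, hv1s.2, hv2s.1, hv2s.2,
        mul_pos hδ'0 hτ0]
    · -- sqrt(2u s) ≥ 1 + δ' : v decays
      have hws : 1 + δ' ≤ Real.sqrt (2 * u s) := by
        rw [abs_of_pos (by linarith)] at hδcon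
        linarith
      have hslope : ∀ t ∈ Icc s (s+τ), 1 - k * v t - Real.sqrt (2 * u t) ≤ -(δ'/4) := by
        intro t ht
        have h2 := (abs_le.1 (hwin t ht)).1
        have h3 := (abs_le.1 (hvsmall t ht.1)).1
        have h4 : k * (-η) ≤ k * v t := mul_le_mul_of_nonneg_left h3 hk.le
        have h5 : k * (-η) = -(k * η) := by ring
        linarith [hkη]
      have d : ∀ t ∈ Ici (0:ℝ), HasDerivWithinAt (fun t => v t + (δ'/4) * t)
          ((1 - k * v t - Real.sqrt (2 * u t)) + (δ'/4) * 1) (Ici 0) t :=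
        fun t ht => (hv' t ht).add ((hasDerivWithinAt_id t (Ici 0)).const_mul (δ'/4))
      have m : v (s+τ) + (δ'/4) * (s+τ) ≤ v s + (δ'/4) * s :=
        keyMono _ _ s (s+τ) hs0 (by linarith) d
          (fun t ht => by have := hslope t ht; linarith)
      have hv1s := abs_le.1 (hvsmall s le_rfl)
      have hv2s := abs_le.1 (hvsmall (s+τ) (by linarith))
      nlinarith [m, hη2, hδ'0, hτ0, hv1s.1, hv1s.2, hv2s.1, hv2s.2,
        mul_pos hδ'0 hτ0]
  have hu : Tendsto u atTop (nhds (1/2)) := by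
    have h1 : Tendsto (fun s => Real.sqrt (2 * u s)^2 / 2) atTop (nhds (1/2)) := by
      rw [show (1:ℝ)/2 = (1:ℝ)^2/2 by norm_num]
      exact (hq.pow 2).div_const 2
    apply h1.congr'
    filter_upwards [eventually_ge_atTop (0:ℝ)] with s hs
    rw [Real.sq_sqrt (by linarith [hunn s hs] : (0:ℝ) ≤ 2 * u s)]
    ring
  refine ⟨fun s hs => ⟨hunn s hs, ?_⟩, hu, hv0⟩
  have h := hVle s hs
  rw [hV_def, hC_def] at h
  exact h
end
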